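/- arXiv:math/0501538 — 7 statements merged into one kernel-verified Lean document; each statement's English description precedes it below -/
import Mathlib

section
/- Fix γ = [b_1,...,b_m] in Γ(X) and let Γ(X;γ) = {δ ∈ Γ(X) : δ ≥ γ}. An element c = [c_1,...,c_m] of Γ(X;γ) is join-irreducible in Γ(X;γ) (i.e., there is exactly one element covered by c) if and only if there is a unique index i ∈ {1,...,m} such that c_i > b_i and c_i > c_{i-1} + 1, where c_0 := 0. -/
def IsTup (n m : ℕ) (c : Fin m → ℕ) : Prop :=
  StrictMono c ∧ ∀ i, 1 ≤ c i ∧ c i ≤ n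

def Gamma (n m : ℕ) : Set (Fin m → ℕ) := {c | IsTup n m c}

def GammaF (n m : ℕ) (b : Fin m → ℕ) : Set (Fin m → ℕ) :=
  {c | IsTup n m c ∧ b ≤ c}

/-- `prev c i` is `c (i-1)`, with the convention `c 0 = 0` (1-based indexing). -/
def prev {m : ℕ} (c : Fin m → ℕ) (i : Fin m) : ℕ :=
  if _ : i.1 = 0 then 0 else c ⟨i.1 - 1, Nat.lt_of_le_of_lt (Nat.sub_le _ _) i.2⟩

/-- the condition `c i > b i` and `c i > c (i-1) + 1`. -/
def Good {m : ℕ} (b c : Fin m → ℕ) (i : Fin m) : Prop :=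
  b i < c i ∧ prev c i + 1 < c i

/-- `c` is join-irreducible in `Γ(X;γ)`: it covers exactly one element. -/
def JoinIrr (n m : ℕ) (b : Fin m → ℕ) (c : ↥(GammaF n m b)) : Prop :=
  ∃! y : ↥(GammaF n m b), y ⋖ c

/-- the poset of join-irreducible elements of `Γ(X;γ)`. -/
def JP (n m : ℕ) (b : Fin m → ℕ) : Set ↥(GammaF n m b) := {c | JoinIrr n m b c}

/-- the map φ, computed at index `i` (0-based; 1-based index is `i+1`). -/
def phi (n m : ℕ) (c : Fin m → ℕ) (i : Fin m) : ℕ × ℕ :=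
  (n - c i - (m - 1 - i.1), i.1)

namespace Stmt2Aux

variable {n m : ℕ} {b : Fin m → ℕ}

lemma cdec_mem (hb : b ∈ Gamma n m) {c : Fin m → ℕ} (hc : c ∈ GammaF n m b)
    {i : Fin m} (hi : Good b c i) :
    Function.update c i (c i - 1) ∈ GammaF n m b := by
  obtain ⟨⟨hmono, hbd⟩, hle⟩ := hc
  have h1 : 1 ≤ b i := (hb.2 i).1
  have hbi : b i ≤ c i - 1 := Nat.le_sub_one_of_lt hi.1
  refine ⟨⟨?_, ?_⟩, ?_⟩
  · intro j k hjk
    rcases eq_or_ne j i with rfl | hj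
    · rw [Function.update_self, Function.update_of_ne (Fin.ne_of_gt hjk)]
      exact lt_of_le_of_lt (Nat.sub_le _ _) (hmono hjk)
    · rw [Function.update_of_ne hj]
      rcases eq_or_ne k i with rfl | hk
      · rw [Function.update_self]
        have hk0 : k.1 ≠ 0 := by
          have := hjk
          omega
        have hprev : prev c k = c ⟨k.1 - 1, Nat.lt_of_le_of_lt (Nat.sub_le _ _) k.2⟩ :=
          dif_neg hk0
        have hjle : c j ≤ c ⟨k.1 - 1, Nat.lt_of_le_of_lt (Nat.sub_le _ _) k.2⟩ := by
          apply hmono.monotone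
          have : j.1 < k.1 := hjk
          exact Fin.mk_le_mk.mpr (by omega) |>.trans_eq rfl
        have := hi.2
        rw [hprev] at this
        omega
      · rw [Function.update_of_ne hk]
        exact hmono hjk
  · intro j
    rcases eq_or_ne j i with rfl | hj
    · rw [Function.update_self]
      constructor
      · omega
      · exact le_trans (Nat.sub_le _ _) (hbd j).2
    · rw [Function.update_of_ne hj]; exact hbd j
  · intro j
    rcases eq_or_ne j i with rfl | hj
    · rw [Function.update_self]; exact hbi
    · rw [Function.update_of_ne hj]; exact hle j

lemma cdec_lt {c : Fin m → ℕ} (hc : c ∈ GammaF n m b) (i : Fin m) :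
    Function.update c i (c i - 1) < c := by
  have h1 : 1 ≤ c i := (hc.1.2 i).1
  rw [Pi.lt_def]
  refine ⟨fun j => ?_, ⟨i, ?_⟩⟩
  · rcases eq_or_ne j i with rfl | hj
    · rw [Function.update_self]; exact Nat.sub_le _ _
    · rw [Function.update_of_ne hj]
  · rw [Function.update_self]; omega

lemma cdec_covby (hb : b ∈ Gamma n m) (c : ↥(GammaF n m b))
    {i : Fin m} (hi : Good b (c : Fin m → ℕ) i) :
    (⟨Function.update (c : Fin m → ℕ) i ((c : Fin m → ℕ) i - 1),
      cdec_mem hb c.2 hi⟩ : ↥(GammaF n m b)) ⋖ c := by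
  constructor
  · exact Subtype.mk_lt_mk.mpr (cdec_lt c.2 i)
  · rintro ⟨z, hz⟩ h1 h2
    rw [Subtype.mk_lt_mk] at h1 h2
    have h1' := h1.le
    have h2' := h2.le
    have hzc : ∀ j, j ≠ i → z j = (c : Fin m → ℕ) j := by
      intro j hj
      have := h1' j
      rw [Function.update_of_ne hj] at this
      exact le_antisymm (h2' j) this
    obtain ⟨_, j, hj⟩ := Pi.lt_def.mp h2
    rcases eq_or_ne j i with rfl | hne
    swap
    · rw [hzc j hne] at hj; omega
    have hzi : (c : Fin m → ℕ) j - 1 ≤ z j := by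
      have := h1' j; rwa [Function.update_self] at this
    have : z = Function.update (c : Fin m → ℕ) j ((c : Fin m → ℕ) j - 1) := by
      funext k
      rcases eq_or_ne k j with rfl | hk
      · rw [Function.update_self]; omega
      · rw [Function.update_of_ne hk]; exact hzc k hk
    rw [this] at h1
    exact lt_irrefl _ h1

lemma exists_good_of_lt {c y : Fin m → ℕ} (hc : c ∈ GammaF n m b)
    (hy : y ∈ GammaF n m b) (hlt : y < c) :
    ∃ i, Good b c i ∧ y ≤ Function.update c i (c i - 1) := by
  obtain ⟨hle, k, hk⟩ := Pi.lt_def.mp hlt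
  have hne : (Finset.univ.filter fun i => y i < c i).Nonempty :=
    ⟨k, by simp [hk]⟩
  obtain ⟨i, hi, hmin⟩ : ∃ i, y i < c i ∧ ∀ j, y j < c j → i ≤ j := by
    refine ⟨(Finset.univ.filter fun i => y i < c i).min' hne, ?_, fun j hj => ?_⟩
    · simpa using Finset.min'_mem _ hne
    · exact Finset.min'_le _ _ (by simp [hj])
  have heq : ∀ j, j < i → y j = c j := by
    intro j hj
    rcases lt_or_eq_of_le (hle j) with h | h
    · exact absurd (hmin j h) (not_le.mpr hj)
    · exact h
  have hgood : Good b c i := by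
    refine ⟨lt_of_le_of_lt (hy.2 i) hi, ?_⟩
    rcases Nat.eq_zero_or_pos i.1 with h0 | h0
    · rw [prev, dif_pos h0]
      have := (hy.1.2 i).1
      omega
    · have h0' : i.1 ≠ 0 := by omega
      rw [prev, dif_neg h0']
      set i' : Fin m := ⟨i.1 - 1, Nat.lt_of_le_of_lt (Nat.sub_le _ _) i.2⟩
      have hlt' : i' < i := by
        simp only [Fin.lt_def]; show i.1 - 1 < i.1; omega
      have h1 : y i' = c i' := heq i' hlt'
      have h2 : y i' < y i := hy.1.1 hlt'
      omega
  refine ⟨i, hgood, fun j => ?_⟩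
  rcases eq_or_ne j i with rfl | hj
  · rw [Function.update_self]
    exact Nat.le_sub_one_of_lt hi
  · rw [Function.update_of_ne hj]; exact hle j

lemma cdec_inj {c : Fin m → ℕ} (hc : c ∈ GammaF n m b) {i j : Fin m}
    (h : Function.update c i (c i - 1) = Function.update c j (c j - 1)) : i = j := by
  by_contra hne
  have := congrFun h j
  rw [Function.update_of_ne (Ne.symm hne), Function.update_self] at this
  have := (hc.1.2 j).1
  omega

lemma eq_cdec_of_covby (hb : b ∈ Gamma n m) {c y : ↥(GammaF n m b)}
    (h : y ⋖ c) :
    ∃ i, Good b (c : Fin m → ℕ) i ∧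
      (y : Fin m → ℕ) = Function.update (c : Fin m → ℕ) i ((c : Fin m → ℕ) i - 1) := by
  have hlt : (y : Fin m → ℕ) < (c : Fin m → ℕ) := Subtype.coe_lt_coe.mpr h.1
  obtain ⟨i, hgood, hle⟩ := exists_good_of_lt c.2 y.2 hlt
  refine ⟨i, hgood, ?_⟩
  set d : ↥(GammaF n m b) := ⟨_, cdec_mem hb c.2 hgood⟩
  have hdc : d < c := Subtype.mk_lt_mk.mpr (cdec_lt c.2 i)
  have hyd : y ≤ d := hle
  rcases eq_or_lt_of_le hyd with heq | hlt'
  · exact congrArg Subtype.val heq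
  · exact absurd hdc (h.2 hlt')

end Stmt2Aux

theorem stmt2 (n m : ℕ) (hm : 1 ≤ m) (hmn : m ≤ n) (b : Fin m → ℕ)
    (hb : b ∈ Gamma n m) (c : ↥(GammaF n m b)) :
    JoinIrr n m b c ↔ ∃! i : Fin m, Good b (c : Fin m → ℕ) i := by
  open Stmt2Aux in
  constructor
  · rintro ⟨y, hy, huniq⟩
    obtain ⟨i, hgood, hyeq⟩ := Stmt2Aux.eq_cdec_of_covby hb hy
    refine ⟨i, hgood, fun j hj => ?_⟩
    have hjc := Stmt2Aux.cdec_covby hb c hj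
    have := huniq _ hjc
    have hic := Stmt2Aux.cdec_covby hb c hgood
    have := huniq _ hic
    have heq : Function.update (c : Fin m → ℕ) j ((c : Fin m → ℕ) j - 1)
        = Function.update (c : Fin m → ℕ) i ((c : Fin m → ℕ) i - 1) := by
      have h1 := huniq _ hjc
      have h2 := huniq _ hic
      have := h1.trans h2.symm
      exact congrArg Subtype.val this
    exact Stmt2Aux.cdec_inj c.2 heq
  · rintro ⟨i, hgood, huniq⟩
    refine ⟨⟨_, Stmt2Aux.cdec_mem hb c.2 hgood⟩, Stmt2Aux.cdec_covby hb c hgood, ?_⟩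
    rintro y hy
    obtain ⟨j, hjgood, hyeq⟩ := Stmt2Aux.eq_cdec_of_covby hb hy
    have := huniq j hjgood
    subst this
    exact Subtype.ext hyeq
end

section
/- Let c and d be join-irreducible elements of Γ(X;γ), with φ(c) = (p,q) and φ(d) = (p',q'). Then c ≤ d in Γ(X;γ) if and only if p ≥ p' and q ≥ q'. -/
open Function

section Prev

variable {m : ℕ}

lemma prev_of_val_add_one_eq (c : Fin m → ℕ) {k k' : Fin m} (h : k'.1 + 1 = k.1) :
    prev c k = c k' := by
  rw [prev, dif_neg (by omega)]
  congr 1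
  ext
  simp only
  omega

lemma Fin.exists_val_add_one_eq {k : Fin m} (hk : k.1 ≠ 0) : ∃ k' : Fin m, k'.1 + 1 = k.1 :=
  ⟨⟨k.1 - 1, by omega⟩, by simp only; omega⟩

lemma prev_le_prev {c d : Fin m → ℕ} {k : Fin m} (h : ∀ l < k, c l ≤ d l) :
    prev c k ≤ prev d k := by
  by_cases hk : k.1 = 0
  · simp [prev, hk]
  · obtain ⟨k', hk'⟩ := Fin.exists_val_add_one_eq hk
    rw [prev_of_val_add_one_eq c hk', prev_of_val_add_one_eq d hk']
    exact h k' (Fin.lt_def.mpr (by omega))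

lemma StrictMono.le_prev {c : Fin m → ℕ} (hc : StrictMono c) {a k : Fin m} (h : a < k) :
    c a ≤ prev c k := by
  obtain ⟨k', hk'⟩ := Fin.exists_val_add_one_eq (k := k) (by omega)
  rw [prev_of_val_add_one_eq c hk']
  exact hc.monotone (Fin.le_def.mpr (by omega))

lemma StrictMono.apply_add_le {c : Fin m → ℕ} (hc : StrictMono c) {k i : Fin m} (h : k ≤ i) :
    c k + (i.1 - k.1) ≤ c i := by
  induction i using WellFoundedLT.induction with
  | ind i ih =>
    rcases h.eq_or_lt with rfl | hlt
    · simp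
    · obtain ⟨i', hi'⟩ := Fin.exists_val_add_one_eq (k := i) (by omega)
      have := ih i' (Fin.lt_def.mpr (by omega)) (Fin.le_def.mpr (by omega))
      have := hc (Fin.lt_def.mpr (by omega) : i' < i)
      omega

lemma apply_le_of_forall_le_or_le_prev_add_one {c d : Fin m → ℕ} (hd : ∀ k, prev d k + 1 ≤ d k)
    (k : Fin m) (h : ∀ l ≤ k, c l ≤ d l ∨ c l ≤ prev c l + 1) : c k ≤ d k := by
  induction k using WellFoundedLT.induction with
  | ind k ih =>
    rcases h k le_rfl with hk | hk
    · exact hk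
    · have := prev_le_prev fun l hl => ih l hl fun l' hl' => h l' (hl'.trans hl.le)
      have := hd k
      omega

end Prev

section IsTup

variable {n m : ℕ} {c : Fin m → ℕ}

lemma IsTup.prev_add_one_le (hc : IsTup n m c) (k : Fin m) : prev c k + 1 ≤ c k := by
  by_cases hk : k.1 = 0
  · simpa [prev, hk] using (hc.2 k).1
  · obtain ⟨k', hk'⟩ := Fin.exists_val_add_one_eq hk
    rw [prev_of_val_add_one_eq c hk']
    exact hc.1 (Fin.lt_def.mpr (by omega))

lemma IsTup.apply_add_le (hc : IsTup n m c) (i : Fin m) : c i + (m - 1 - i.1) ≤ n := by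
  have hi := i.2
  have hlast := hc.1.apply_add_le (Fin.le_def.mpr (show i.1 ≤ m - 1 by omega) : i ≤ ⟨m - 1, by omega⟩)
  have := (hc.2 ⟨m - 1, by omega⟩).2
  simp only at hlast
  omega

end IsTup

section JoinIrr

variable {n m : ℕ} {b : Fin m → ℕ}

lemma update_sub_one_mem_gammaF {c : Fin m → ℕ} (hc : c ∈ GammaF n m b) {k : Fin m}
    (hk : Good b c k) : update c k (c k - 1) ∈ GammaF n m b := by
  obtain ⟨⟨hmono, hbound⟩, hbc⟩ := hc
  obtain ⟨hbk, hprev⟩ := hk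
  refine ⟨⟨fun a a' h => ?_, fun l => ?_⟩, fun l => ?_⟩
  · by_cases ha : a = k <;> by_cases ha' : a' = k
    · exact absurd (ha ▸ ha' ▸ h) (lt_irrefl _)
    · subst ha
      simp only [update_self, update_of_ne ha']
      have := hmono h
      omega
    · subst ha'
      simp only [update_self, update_of_ne ha]
      have := hmono.le_prev h
      omega
    · simpa only [update_of_ne ha, update_of_ne ha'] using hmono h
  · rcases eq_or_ne l k with rfl | hl
    · simp only [update_self]
      have := hbound l
      omega
    · simpa only [update_of_ne hl] using hbound l
  · rcases eq_or_ne l k with rfl | hl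
    · simp only [update_self]
      omega
    · simpa only [update_of_ne hl] using hbc l

lemma exists_covBy_of_good (c : ↥(GammaF n m b)) {k : Fin m} (hk : Good b c.1 k) :
    ∃ y : ↥(GammaF n m b), y ⋖ c ∧ y.1 = update c.1 k (c.1 k - 1) := by
  refine ⟨⟨_, update_sub_one_mem_gammaF c.2 hk⟩, CovBy.of_image (OrderEmbedding.subtype _) ?_, rfl⟩
  refine Pi.covBy_iff_exists_left_eq.mpr ⟨k, _, Order.covBy_iff_add_one_eq.mpr ?_, rfl⟩
  show c.1 k - 1 + 1 = c.1 k
  have := hk.1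
  omega

theorem JoinIrr.eq_of_good {c : ↥(GammaF n m b)} (hc : JoinIrr n m b c) {i k : Fin m}
    (hi : Good b c.1 i) (hk : Good b c.1 k) : i = k := by
  by_contra hne
  obtain ⟨yi, hyi, hyi_eq⟩ := exists_covBy_of_good c hi
  obtain ⟨yk, hyk, hyk_eq⟩ := exists_covBy_of_good c hk
  have hval := congrFun (congrArg Subtype.val (hc.unique hyi hyk)) i
  rw [hyi_eq, hyk_eq, update_self, update_of_ne hne] at hval
  have := hi.1
  omega

lemma JoinIrr.le_or_le_prev_add_one {c : ↥(GammaF n m b)} (hc : JoinIrr n m b c) {i k : Fin m}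
    (hi : Good b c.1 i) (hk : k ≠ i) : c.1 k ≤ b k ∨ c.1 k ≤ prev c.1 k + 1 := by
  have : ¬ Good b c.1 k := fun hk' => hk (hc.eq_of_good hk' hi)
  simpa only [Good, not_and_or, not_lt] using this

lemma JoinIrr.apply_eq_of_lt (hb : b ∈ Gamma n m) {c : ↥(GammaF n m b)} (hc : JoinIrr n m b c)
    {i k : Fin m} (hi : Good b c.1 i) (hk : k < i) : c.1 k = b k :=
  le_antisymm
    (apply_le_of_forall_le_or_le_prev_add_one hb.prev_add_one_le k fun _ hl =>
      hc.le_or_le_prev_add_one hi (hl.trans_lt hk).ne)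
    (c.2.2 k)

lemma JoinIrr.le_iff {c : ↥(GammaF n m b)} (hc : JoinIrr n m b c) {i : Fin m}
    (hi : Good b c.1 i) (d : ↥(GammaF n m b)) : c ≤ d ↔ c.1 i ≤ d.1 i := by
  refine ⟨fun h => h i, fun h k => ?_⟩
  refine apply_le_of_forall_le_or_le_prev_add_one d.2.1.prev_add_one_le k fun l _ => ?_
  rcases eq_or_ne l i with rfl | hl
  · exact Or.inl h
  · exact (hc.le_or_le_prev_add_one hi hl).imp_left (·.trans (d.2.2 l))

lemma JoinIrr.apply_le_or_add_le (hb : b ∈ Gamma n m) {d : ↥(GammaF n m b)}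
    (hd : JoinIrr n m b d) {j k : Fin m} (hj : Good b d.1 j) (hk : j ≤ k) :
    d.1 k ≤ b k ∨ d.1 k + j.1 ≤ d.1 j + k.1 := by
  induction k using WellFoundedLT.induction with
  | ind k ih =>
    rcases hk.eq_or_lt with rfl | hlt
    · exact Or.inr le_rfl
    obtain ⟨k', hk'⟩ := Fin.exists_val_add_one_eq (k := k) (by omega)
    have hb_step := hb.prev_add_one_le k
    rw [prev_of_val_add_one_eq b hk'] at hb_step
    have ih' := ih k' (Fin.lt_def.mpr (by omega)) (Fin.le_def.mpr (by omega))
    have hd_step := hd.le_or_le_prev_add_one hj hlt.ne'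
    rw [prev_of_val_add_one_eq d.1 hk'] at hd_step
    omega

lemma JoinIrr.le_apply_iff (hb : b ∈ Gamma n m) {d : ↥(GammaF n m b)} (hd : JoinIrr n m b d)
    {i j : Fin m} (hj : Good b d.1 j) {v : ℕ} (hv : b i < v) :
    v ≤ d.1 i ↔ j ≤ i ∧ v + j.1 ≤ d.1 j + i.1 := by
  constructor
  · intro h
    have hji : j ≤ i := by
      by_contra! hij
      have := hd.apply_eq_of_lt hb hj hij
      omega
    have := hd.apply_le_or_add_le hb hj hji
    exact ⟨hji, by omega⟩
  · rintro ⟨hji, h⟩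
    have := d.2.1.1.apply_add_le hji
    omega

end JoinIrr

theorem stmt4_general (n m : ℕ) (b : Fin m → ℕ)
    (hb : b ∈ Gamma n m) (c d : ↥(GammaF n m b))
    (hc : JoinIrr n m b c) (hd : JoinIrr n m b d)
    (i j : Fin m) (hi : Good b (c : Fin m → ℕ) i) (hj : Good b (d : Fin m → ℕ) j)
    (p q p' q' : ℕ) (hpq : phi n m (c : Fin m → ℕ) i = (p, q))
    (hpq' : phi n m (d : Fin m → ℕ) j = (p', q')) :
    c ≤ d ↔ p' ≤ p ∧ q' ≤ q := by
  simp only [phi, Prod.mk.injEq] at hpq hpq'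
  have hci := c.2.1.apply_add_le i
  have hdj := d.2.1.apply_add_le j
  rw [hc.le_iff hi, hd.le_apply_iff hb hj hi.1, Fin.le_def]
  omega

theorem stmt4 (n m : ℕ) (hm : 1 ≤ m) (hmn : m ≤ n) (b : Fin m → ℕ)
    (hb : b ∈ Gamma n m) (c d : ↥(GammaF n m b))
    (hc : JoinIrr n m b c) (hd : JoinIrr n m b d)
    (i j : Fin m) (hi : Good b (c : Fin m → ℕ) i) (hj : Good b (d : Fin m → ℕ) j)
    (p q p' q' : ℕ) (hpq : phi n m (c : Fin m → ℕ) i = (p, q))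
    (hpq' : phi n m (d : Fin m → ℕ) j = (p', q')) :
    c ≤ d ↔ p' ≤ p ∧ q' ≤ q :=
  stmt4_general n m b hb c d hc hd i j hi hj p q p' q' hpq hpq'
end

section
/- For a join-irreducible element c of Γ(X;γ) with φ(c) = (p,q), the coheight of c in the poset P of join-irreducible elements of Γ(X;γ) equals p + q, i.e., the longest chain in P starting at c has length p + q. -/
section Helpers

variable {n m : ℕ} {b : Fin m → ℕ}

lemma prev_zero {c : Fin m → ℕ} {i : Fin m} (h : i.1 = 0) : prev c i = 0 := dif_pos h

lemma prev_ne {c : Fin m → ℕ} {i : Fin m} (h : i.1 ≠ 0) :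
    prev c i = c ⟨i.1 - 1, Nat.lt_of_le_of_lt (Nat.sub_le _ _) i.2⟩ := dif_neg h

/-- gap lemma for strictly monotone ℕ-valued functions on Fin m -/
lemma gap {c : Fin m → ℕ} (hc : StrictMono c) (a e : Fin m) (h : a ≤ e) :
    c a + (e.1 - a.1) ≤ c e := by
  obtain ⟨d, hd⟩ : ∃ d, e.1 = a.1 + d := ⟨e.1 - a.1, by omega⟩
  have key : ∀ d (hdm : a.1 + d < m), c a + d ≤ c ⟨a.1 + d, hdm⟩ := by
    intro d
    induction d with
    | zero => intro h'; simp
    | succ k ih =>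
      intro h'
      have h1 : a.1 + k < m := by omega
      have := ih h1
      have h2 : c ⟨a.1 + k, h1⟩ < c ⟨a.1 + (k+1), h'⟩ := hc (by simp [Fin.lt_def])
      omega
  have := key d (hd ▸ e.2)
  have : c a + d ≤ c e := by
    convert this using 2
    exact Fin.ext hd
  omega

lemma strictMono_of_adj {c : Fin m → ℕ}
    (h : ∀ k, ∀ hk1 : k < m, ∀ hk : k + 1 < m, c ⟨k, hk1⟩ < c ⟨k + 1, hk⟩) : StrictMono c := by
  have key : ∀ (e a : ℕ) (hae : a < e) (he : e < m), c ⟨a, by omega⟩ < c ⟨e, he⟩ := by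
    intro e
    induction e with
    | zero => omega
    | succ k ih =>
      intro a hae he
      rcases Nat.lt_or_ge a k with hlt | hge
      · exact lt_trans (ih a hlt (by omega)) (h k (by omega) he)
      · have ha : a = k := by omega
        subst ha
        exact h a (by omega) he
  intro a e hae
  have := key e.1 a.1 hae e.2
  simpa using this

end Helpers

section Main

variable {n m : ℕ} {b : Fin m → ℕ}

/-- the canonical join-irreducible tuple with good index `i` and value `v`. -/
def D (b : Fin m → ℕ) (i : Fin m) (v : ℕ) : Fin m → ℕ :=
  fun j => if j.1 < i.1 then b j else max (b j) (v + (j.1 - i.1))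

def Valid (n : ℕ) (b : Fin m → ℕ) (i : Fin m) (v : ℕ) : Prop :=
  b i < v ∧ v + (m - 1 - i.1) ≤ n

lemma D_lt {i : Fin m} {v : ℕ} {j : Fin m} (h : j.1 < i.1) : D b i v j = b j := if_pos h

lemma D_ge {i : Fin m} {v : ℕ} {j : Fin m} (h : i.1 ≤ j.1) :
    D b i v j = max (b j) (v + (j.1 - i.1)) := if_neg (by omega)

lemma D_self {i : Fin m} {v : ℕ} (h : b i < v) : D b i v i = v := by
  rw [D_ge (le_refl i.1)]
  omega

lemma prev_lt {x : Fin m → ℕ} (hx : x ∈ GammaF n m b) (j : Fin m) : prev x j < x j := by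
  by_cases h : j.1 = 0
  · rw [prev_zero h]; exact (hx.1.2 j).1
  · rw [prev_ne h]
    exact hx.1.1 (by simp only [Fin.lt_def]; omega)

lemma prev_le {x : Fin m → ℕ} (hx : x ∈ GammaF n m b) (j : Fin m) : prev x j + 1 ≤ x j :=
  prev_lt hx j

/-- pointwise inequality extraction with proper instances -/
lemma le_pt {x y : Fin m → ℕ} (h : x ≤ y) (a : Fin m) : x a ≤ y a := h a

/-- update at a good index gives a member of GammaF -/
lemma update_mem {x : Fin m → ℕ} (hx : x ∈ GammaF n m b) {j : Fin m}
    (hj : Good b x j) : Function.update x j (x j - 1) ∈ GammaF n m b := by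
  obtain ⟨⟨hsm, hbd⟩, hbx⟩ := hx
  obtain ⟨hj1, hj2⟩ := hj
  have hx1 : 1 ≤ x j := (hbd j).1
  refine ⟨⟨?_, ?_⟩, ?_⟩
  · intro a e hae
    have haev : a.1 < e.1 := hae
    rcases eq_or_ne a j with ha | ha <;> rcases eq_or_ne e j with he | he
    · exfalso; rw [ha, he] at haev; omega
    · rw [ha, Function.update_of_ne he, Function.update_self]
      have h5 : x j < x e := hsm (show j < e by rw [← ha]; exact hae)
      omega
    · rw [he, Function.update_of_ne ha, Function.update_self]
      have hj0 : j.1 ≠ 0 := by rw [he] at haev; omega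
      rw [prev_ne hj0] at hj2
      have h6 : x a ≤ x ⟨j.1 - 1, by omega⟩ := by
        rcases eq_or_lt_of_le (show a.1 ≤ j.1 - 1 by rw [he] at haev; omega) with h1 | h1
        · exact le_of_eq (congrArg x (Fin.ext h1))
        · exact le_of_lt (hsm (show a < _ from h1))
      omega
    · rw [Function.update_of_ne ha, Function.update_of_ne he]
      exact hsm hae
  · intro a
    rcases eq_or_ne a j with ha | ha
    · rw [ha, Function.update_self]
      have := (hbd j).2
      refine ⟨by omega, by omega⟩
    · rw [Function.update_of_ne ha]; exact hbd a
  · intro a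
    rcases eq_or_ne a j with ha | ha
    · have hb1 := le_pt hbx j
      rw [ha, Function.update_self]
      show b j ≤ x j - 1
      omega
    · rw [Function.update_of_ne ha]
      exact le_pt hbx a

/-- update at a good index is covered by x -/
lemma update_covby {x : Fin m → ℕ} (hx : x ∈ GammaF n m b) {j : Fin m}
    (hj : Good b x j) :
    (⟨Function.update x j (x j - 1), update_mem hx hj⟩ : ↥(GammaF n m b)) ⋖ ⟨x, hx⟩ := by
  have hx1 : 1 ≤ x j := (hx.1.2 j).1
  constructor
  · rw [Subtype.mk_lt_mk]
    constructor
    · intro a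
      rcases eq_or_ne a j with ha | ha
      · rw [ha, Function.update_self]
        show x j - 1 ≤ x j
        omega
      · rw [Function.update_of_ne ha]
    · intro hle
      have h7 : x j ≤ Function.update x j (x j - 1) j := le_pt hle j
      rw [Function.update_self] at h7
      omega
  · rintro ⟨z, hz⟩ h1 h2
    rw [Subtype.mk_lt_mk] at h1 h2
    have hz1 : ∀ a, a ≠ j → z a = x a := by
      intro a ha
      have l1 : Function.update x j (x j - 1) a ≤ z a := le_pt (le_of_lt h1) a
      have l2 : z a ≤ x a := le_pt (le_of_lt h2) a
      rw [Function.update_of_ne ha] at l1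
      exact le_antisymm l2 l1
    have l1 : Function.update x j (x j - 1) j ≤ z j := le_pt (le_of_lt h1) j
    have l2 : z j ≤ x j := le_pt (le_of_lt h2) j
    rw [Function.update_self] at l1
    rcases eq_or_ne (z j) (x j) with he | he
    · refine (not_le_of_gt h2) (fun a => ?_)
      show x a ≤ z a
      rcases eq_or_ne a j with ha | ha
      · rw [ha, he]
      · rw [hz1 a ha]
    · refine (not_le_of_gt h1) (fun a => ?_)
      show z a ≤ Function.update x j (x j - 1) a
      rcases eq_or_ne a j with ha | ha
      · rw [ha, Function.update_self]
        show z j ≤ x j - 1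
        omega
      · rw [hz1 a ha, Function.update_of_ne ha]

lemma nat_min {P : ℕ → Prop} (h : ∃ k, P k) : ∃ k, P k ∧ ∀ k' < k, ¬ P k' := by
  classical
  exact ⟨Nat.find h, Nat.find_spec h, fun k' hk' => Nat.find_min h hk'⟩

/-- every cover of x is an update at a good index -/
lemma covby_eq_update {x y : ↥(GammaF n m b)} (h : y ⋖ x) :
    ∃ j, Good b (x : Fin m → ℕ) j ∧
      (y : Fin m → ℕ) = Function.update (x : Fin m → ℕ) j ((x : Fin m → ℕ) j - 1) := by
  classical
  obtain ⟨hlt, hnb⟩ := h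
  have hle : ∀ a, y.1 a ≤ x.1 a := fun a => le_pt (le_of_lt (Subtype.coe_lt_coe.mpr hlt)) a
  have hne : (y : Fin m → ℕ) ≠ (x : Fin m → ℕ) := fun he => by
    exact lt_irrefl _ (Subtype.ext he ▸ hlt)
  have hex : ∃ k, ∃ hk : k < m, y.1 ⟨k, hk⟩ < x.1 ⟨k, hk⟩ := by
    by_contra hc
    push_neg at hc
    refine hne (funext fun a => le_antisymm (hle a) ?_)
    have := hc a.1 a.2
    simpa using this
  obtain ⟨k, ⟨hk, hklt⟩, hmin0⟩ := nat_min hex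
  have hmin : ∀ k', k' < k → ∀ hk' : k' < m, x.1 ⟨k', hk'⟩ ≤ y.1 ⟨k', hk'⟩ := by
    intro k' h1 hk'
    have := hmin0 k' h1
    push_neg at this
    exact this hk'
  have hgood : Good b (x : Fin m → ℕ) ⟨k, hk⟩ := by
    have hby : b ⟨k, hk⟩ ≤ y.1 ⟨k, hk⟩ := le_pt y.2.2 _
    constructor
    · show b ⟨k, hk⟩ < x.1 ⟨k, hk⟩
      omega
    · by_cases h0 : k = 0
      · rw [prev_zero h0]
        have h9 : 1 ≤ y.1 ⟨k, hk⟩ := (y.2.1.2 _).1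
        show 0 + 1 < x.1 ⟨k, hk⟩
        omega
      · rw [prev_ne h0]
        have e1 : x.1 ⟨k - 1, by omega⟩ ≤ y.1 ⟨k - 1, by omega⟩ := hmin (k-1) (by omega) _
        have e2 : y.1 ⟨k - 1, by omega⟩ < y.1 ⟨k, hk⟩ :=
          y.2.1.1 (show (⟨k-1, by omega⟩ : Fin m) < ⟨k, hk⟩ by
            simp only [Fin.mk_lt_mk]; omega)
        show x.1 ⟨k - 1, by omega⟩ + 1 < x.1 ⟨k, hk⟩
        omega
  refine ⟨⟨k, hk⟩, hgood, ?_⟩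
  set u : ↥(GammaF n m b) := ⟨Function.update (x : Fin m → ℕ) ⟨k, hk⟩ ((x : Fin m → ℕ) ⟨k, hk⟩ - 1), update_mem x.2 hgood⟩ with hu
  have hyu : y ≤ u := by
    intro a
    show y.1 a ≤ u.1 a
    rcases eq_or_ne a ⟨k, hk⟩ with ha | ha
    · rw [ha]
      show y.1 ⟨k, hk⟩ ≤ Function.update (x : Fin m → ℕ) ⟨k, hk⟩ ((x : Fin m → ℕ) ⟨k, hk⟩ - 1) ⟨k, hk⟩
      rw [Function.update_self]
      omega
    · show y.1 a ≤ Function.update (x : Fin m → ℕ) ⟨k, hk⟩ ((x : Fin m → ℕ) ⟨k, hk⟩ - 1) a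
      rw [Function.update_of_ne ha]
      exact hle a
  have hux : u < x := by
    have h2 := update_covby x.2 hgood
    have h3 : (⟨(x : Fin m → ℕ), x.2⟩ : ↥(GammaF n m b)) = x := Subtype.ext rfl
    rw [h3] at h2
    exact h2.1
  rcases eq_or_lt_of_le hyu with he | hlt2
  · rw [he]
  · exact absurd hux (hnb hlt2)

lemma good_unique {x : ↥(GammaF n m b)} (hx : JoinIrr n m b x) {i j : Fin m}
    (hi : Good b (x : Fin m → ℕ) i) (hj : Good b (x : Fin m → ℕ) j) : i = j := by
  by_contra hne
  obtain ⟨y0, _, huniq⟩ := hx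
  have h3 : (⟨(x : Fin m → ℕ), x.2⟩ : ↥(GammaF n m b)) = x := Subtype.ext rfl
  have ci := update_covby x.2 hi
  have cj := update_covby x.2 hj
  rw [h3] at ci cj
  have e1 := huniq _ ci
  have e2 := huniq _ cj
  have e3 := e1.trans e2.symm
  have e4 : Function.update (x : Fin m → ℕ) i ((x : Fin m → ℕ) i - 1)
      = Function.update (x : Fin m → ℕ) j ((x : Fin m → ℕ) j - 1) := congrArg Subtype.val e3
  have e5 := congrFun e4 i
  rw [Function.update_self, Function.update_of_ne hne] at e5
  have hx1 : 1 ≤ (x : Fin m → ℕ) i := (x.2.1.2 i).1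
  omega

lemma val_eq_max {x : Fin m → ℕ} (hx : x ∈ GammaF n m b) {j : Fin m}
    (h : ¬ Good b x j) : x j = max (b j) (prev x j + 1) := by
  have h1 : prev x j + 1 ≤ x j := prev_le hx j
  have h2 : b j ≤ x j := le_pt hx.2 j
  rw [Good, not_and_or] at h
  rcases h with h | h <;> push_neg at h <;> omega

/-- the closed form for join-irreducible elements -/
lemma eq_D (hb : b ∈ Gamma n m) {x : Fin m → ℕ} (hx : x ∈ GammaF n m b) {i : Fin m}
    (hgood : b i < x i) (hng : ∀ j, j ≠ i → x j = max (b j) (prev x j + 1)) :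
    x = D b i (x i) := by
  have key : ∀ K, ∀ hK : K < m, x ⟨K, hK⟩ = D b i (x i) ⟨K, hK⟩ := by
    intro K
    induction K using Nat.strong_induction_on with
    | _ K ih =>
      intro hK
      rcases Nat.lt_trichotomy K i.1 with hKi | hKi | hKi
      · -- K < i.1
        have hne : (⟨K, hK⟩ : Fin m) ≠ i := fun he => by
          have := congrArg Fin.val he; simp at this; omega
        have e1 : x ⟨K, hK⟩ = max (b ⟨K, hK⟩) (prev x ⟨K, hK⟩ + 1) := hng _ hne
        have e5 : D b i (x i) ⟨K, hK⟩ = b ⟨K, hK⟩ := D_lt hKi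
        rcases Nat.eq_zero_or_pos K with h0 | h0
        · have e2 : prev x ⟨K, hK⟩ = 0 := prev_zero h0
          have e3 : 1 ≤ b ⟨K, hK⟩ := (hb.2 _).1
          omega
        · have e2 : prev x ⟨K, hK⟩ = x ⟨K - 1, by omega⟩ := prev_ne (show K ≠ 0 by omega)
          have e3 : x ⟨K - 1, by omega⟩ = D b i (x i) ⟨K - 1, by omega⟩ := ih (K-1) (by omega) _
          have e4 : D b i (x i) ⟨K - 1, by omega⟩ = b ⟨K - 1, by omega⟩ :=
            D_lt (show K - 1 < i.1 by omega)
          have e6 : b ⟨K - 1, by omega⟩ < b ⟨K, hK⟩ :=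
            hb.1 (show (⟨K - 1, by omega⟩ : Fin m) < ⟨K, hK⟩ by simp only [Fin.mk_lt_mk]; omega)
          omega
      · -- K = i.1
        have he : (⟨K, hK⟩ : Fin m) = i := Fin.ext hKi
        rw [he, D_self hgood]
      · -- K > i.1
        have hne : (⟨K, hK⟩ : Fin m) ≠ i := fun he => by
          have := congrArg Fin.val he; simp at this; omega
        have e1 : x ⟨K, hK⟩ = max (b ⟨K, hK⟩) (prev x ⟨K, hK⟩ + 1) := hng _ hne
        have e2 : prev x ⟨K, hK⟩ = x ⟨K - 1, by omega⟩ := prev_ne (show K ≠ 0 by omega)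
        have e3 : x ⟨K - 1, by omega⟩ = D b i (x i) ⟨K - 1, by omega⟩ := ih (K-1) (by omega) _
        have e4 : D b i (x i) ⟨K - 1, by omega⟩ = max (b ⟨K - 1, by omega⟩) (x i + (K - 1 - i.1)) :=
          D_ge (show i.1 ≤ K - 1 by omega)
        have e5 : D b i (x i) ⟨K, hK⟩ = max (b ⟨K, hK⟩) (x i + (K - i.1)) :=
          D_ge (show i.1 ≤ K by omega)
        have e6 : b ⟨K - 1, by omega⟩ < b ⟨K, hK⟩ :=
          hb.1 (show (⟨K - 1, by omega⟩ : Fin m) < ⟨K, hK⟩ by simp only [Fin.mk_lt_mk]; omega)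
        omega
  funext j
  have := key j.1 j.2
  simpa using this

lemma valid_of {x : Fin m → ℕ} (hx : x ∈ GammaF n m b) {i : Fin m}
    (hgood : Good b x i) : Valid n b i (x i) := by
  refine ⟨hgood.1, ?_⟩
  have hm : 1 ≤ m := by have := i.2; omega
  have h1 : x i + ((m - 1) - i.1) ≤ x ⟨m - 1, by omega⟩ :=
    gap hx.1.1 i ⟨m - 1, by omega⟩ (by rw [Fin.le_def]; simp only [Fin.val_mk]; have := i.2; omega)
  have h2 : x ⟨m - 1, by omega⟩ ≤ n := (hx.1.2 _).2
  omega

lemma D_mem (hb : b ∈ Gamma n m) {i : Fin m} {v : ℕ} (hv : Valid n b i v) :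
    D b i v ∈ GammaF n m b := by
  obtain ⟨hv1, hv2⟩ := hv
  have hm : 1 ≤ m := by have := i.2; omega
  refine ⟨⟨?_, ?_⟩, ?_⟩
  · apply strictMono_of_adj
    intro k hk1 hk
    have hbk : b ⟨k, hk1⟩ < b ⟨k + 1, hk⟩ :=
      hb.1 (show (⟨k, hk1⟩ : Fin m) < ⟨k + 1, hk⟩ by simp only [Fin.mk_lt_mk]; omega)
    rcases Nat.lt_or_ge (k+1) i.1 with h1 | h1
    · rw [D_lt (show k < i.1 by omega), D_lt (show k + 1 < i.1 by omega)]
      exact hbk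
    rcases Nat.lt_or_ge k i.1 with h2 | h2
    · rw [D_lt h2]
      have e1 : D b i v ⟨k+1, hk⟩ = max (b ⟨k+1, hk⟩) (v + (k + 1 - i.1)) :=
        D_ge (show i.1 ≤ k + 1 by omega)
      omega
    · have e0 : D b i v ⟨k, hk1⟩ = max (b ⟨k, hk1⟩) (v + (k - i.1)) := D_ge h2
      have e1 : D b i v ⟨k+1, hk⟩ = max (b ⟨k+1, hk⟩) (v + (k + 1 - i.1)) :=
        D_ge (show i.1 ≤ k + 1 by omega)
      omega
  · intro j
    have hb1 := (hb.2 j).1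
    have hb2 := (hb.2 j).2
    rcases Nat.lt_or_ge j.1 i.1 with h1 | h1
    · rw [D_lt h1]; exact ⟨hb1, hb2⟩
    · have e1 : D b i v j = max (b j) (v + (j.1 - i.1)) := D_ge h1
      have hj2 := j.2
      constructor <;> omega
  · intro j
    rcases Nat.lt_or_ge j.1 i.1 with h1 | h1
    · rw [D_lt h1]
    · have e1 : D b i v j = max (b j) (v + (j.1 - i.1)) := D_ge h1
      show b j ≤ D b i v j
      omega

lemma D_good (hb : b ∈ Gamma n m) {i : Fin m} {v : ℕ} (hv : Valid n b i v) :
    Good b (D b i v) i := by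
  obtain ⟨hv1, hv2⟩ := hv
  constructor
  · rw [D_self hv1]
    exact hv1
  · rw [D_self hv1]
    by_cases h0 : i.1 = 0
    · rw [prev_zero h0]
      have := (hb.2 i).1
      omega
    · have e2 : prev (D b i v) i = D b i v ⟨i.1 - 1, by omega⟩ := prev_ne h0
      have e3 : D b i v ⟨i.1 - 1, by omega⟩ = b ⟨i.1 - 1, by omega⟩ :=
        D_lt (show i.1 - 1 < i.1 by omega)
      have e4 : b ⟨i.1 - 1, by omega⟩ < b i :=
        hb.1 (show (⟨i.1 - 1, by omega⟩ : Fin m) < i by rw [Fin.lt_def]; simp only [Fin.val_mk]; omega)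
      omega

lemma D_not_good (hb : b ∈ Gamma n m) {i : Fin m} {v : ℕ} (hv : Valid n b i v)
    {j : Fin m} (hj : j ≠ i) : ¬ Good b (D b i v) j := by
  obtain ⟨hv1, hv2⟩ := hv
  have hji : j.1 ≠ i.1 := fun h => hj (Fin.ext h)
  rcases Nat.lt_or_ge j.1 i.1 with h1 | h1
  · rw [Good, D_lt h1]
    rintro ⟨h2, -⟩
    omega
  · have h1' : i.1 < j.1 := by omega
    rintro ⟨h2, h3⟩
    have e1 : D b i v j = max (b j) (v + (j.1 - i.1)) := D_ge h1
    have e2 : prev (D b i v) j = D b i v ⟨j.1 - 1, by omega⟩ :=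
      prev_ne (show j.1 ≠ 0 by omega)
    have e3 : D b i v ⟨j.1 - 1, by omega⟩ = max (b ⟨j.1 - 1, by omega⟩) (v + (j.1 - 1 - i.1)) :=
      D_ge (show i.1 ≤ j.1 - 1 by omega)
    omega

lemma D_joinirr (hb : b ∈ Gamma n m) {i : Fin m} {v : ℕ} (hv : Valid n b i v) :
    JoinIrr n m b ⟨D b i v, D_mem hb hv⟩ := by
  have hg := D_good hb hv
  refine ⟨⟨Function.update (D b i v) i (D b i v i - 1), update_mem (D_mem hb hv) hg⟩,
    update_covby (D_mem hb hv) hg, ?_⟩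
  rintro y hy
  obtain ⟨j, hjg, hje⟩ := covby_eq_update hy
  have hji : j = i := by
    by_contra hne
    exact D_not_good hb hv hne hjg
  apply Subtype.ext
  rw [hje, hji]

/-- representation of join-irreducible elements -/
lemma jp_repr (hb : b ∈ Gamma n m) {x : ↥(GammaF n m b)} (hx : JoinIrr n m b x) :
    ∃ i v, Valid n b i v ∧ (x : Fin m → ℕ) = D b i v ∧ Good b (x : Fin m → ℕ) i := by
  obtain ⟨y0, hy0⟩ := hx.exists
  obtain ⟨i, hig, -⟩ := covby_eq_update hy0
  refine ⟨i, (x : Fin m → ℕ) i, valid_of x.2 hig, ?_, hig⟩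
  apply eq_D hb x.2 hig.1
  intro j hj
  apply val_eq_max x.2
  intro hjg
  exact hj (good_unique hx hjg hig)

/-- order characterization -/
lemma D_le_D (hb : b ∈ Gamma n m) {i i' : Fin m} {v v' : ℕ}
    (hv : Valid n b i v) (hv' : Valid n b i' v') :
    D b i v ≤ D b i' v' ↔ (i'.1 ≤ i.1 ∧ v ≤ v' + (i.1 - i'.1)) := by
  constructor
  · intro h
    have h1 : D b i v i ≤ D b i' v' i := le_pt h i
    rw [D_self hv.1] at h1
    have hii : i'.1 ≤ i.1 := by
      by_contra hc
      push_neg at hc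
      rw [D_lt hc] at h1
      exact absurd h1 (by have := hv.1; omega)
    refine ⟨hii, ?_⟩
    have e1 : D b i' v' i = max (b i) (v' + (i.1 - i'.1)) := D_ge hii
    have := hv.1
    omega
  · rintro ⟨hii, hvv⟩
    intro j
    show D b i v j ≤ D b i' v' j
    rcases Nat.lt_or_ge j.1 i'.1 with h1 | h1
    · rw [D_lt (show j.1 < i.1 by omega), D_lt h1]
    rcases Nat.lt_or_ge j.1 i.1 with h2 | h2
    · rw [D_lt h2]
      have e1 : D b i' v' j = max (b j) (v' + (j.1 - i'.1)) := D_ge h1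
      omega
    · have e0 : D b i v j = max (b j) (v + (j.1 - i.1)) := D_ge h2
      have e1 : D b i' v' j = max (b j) (v' + (j.1 - i'.1)) := D_ge h1
      omega

lemma D_lt_D (hb : b ∈ Gamma n m) {i i' : Fin m} {v v' : ℕ}
    (hv : Valid n b i v) (hv' : Valid n b i' v') :
    D b i v < D b i' v' ↔
      (i'.1 ≤ i.1 ∧ v ≤ v' + (i.1 - i'.1) ∧ (i'.1 < i.1 ∨ v < v')) := by
  rw [lt_iff_le_not_ge, D_le_D hb hv hv', D_le_D hb hv' hv]
  constructor
  · rintro ⟨⟨h1, h2⟩, h3⟩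
    refine ⟨h1, h2, ?_⟩
    by_contra hc
    push_neg at hc
    exact h3 ⟨by omega, by omega⟩
  · rintro ⟨h1, h2, h3⟩
    exact ⟨⟨h1, h2⟩, fun ⟨h4, h5⟩ => by omega⟩

lemma D_inj (hb : b ∈ Gamma n m) {i i' : Fin m} {v v' : ℕ}
    (hv : Valid n b i v) (hv' : Valid n b i' v') (h : D b i v = D b i' v') :
    i = i' ∧ v = v' := by
  have h1 := (D_le_D hb hv hv').mp h.le
  have h2 := (D_le_D hb hv' hv).mp h.ge
  exact ⟨Fin.ext (by omega), by omega⟩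

end Main


theorem stmt6 (n m : ℕ) (hm : 1 ≤ m) (hmn : m ≤ n) (b : Fin m → ℕ)
    (hb : b ∈ Gamma n m) (c : ↥(GammaF n m b)) (hc : c ∈ JP n m b)
    (i : Fin m) (hi : Good b (c : Fin m → ℕ) i)
    (p q : ℕ) (hpq : phi n m (c : Fin m → ℕ) i = (p, q)) :
    Order.coheight (⟨c, hc⟩ : ↥(JP n m b)) = (p + q : ℕ) := by
  classical
  have him : i.1 < m := i.2
  set v : ℕ := (c : Fin m → ℕ) i with hv_def
  have hval : Valid n b i v := valid_of c.2 hi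
  have hrep : (c : Fin m → ℕ) = D b i v := by
    obtain ⟨i0, v0, hval0, hrep0, hg0⟩ := jp_repr hb hc
    have : i0 = i := good_unique hc hg0 hi
    subst this
    have hv0 : v0 = v := by
      rw [hv_def, hrep0, D_self hval0.1]
    rw [hrep0, hv0]
  have hpq1 : n - v - (m - 1 - i.1) = p := congrArg Prod.fst hpq
  have hpq2 : i.1 = q := congrArg Prod.snd hpq
  have hkey : v + (m - 1 - i.1) ≤ n := hval.2
  have hbi : b i < v := hval.1
  -- the representing data for arbitrary JP elements
  have H : ∀ y : ↥(JP n m b), ∃ jw : Fin m × ℕ,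
      Valid n b jw.1 jw.2 ∧ ((y : ↥(GammaF n m b)) : Fin m → ℕ) = D b jw.1 jw.2 := by
    intro y
    obtain ⟨j, w, h1, h2, -⟩ := jp_repr hb y.2
    exact ⟨(j, w), h1, h2⟩
  choose g hg1 hg2 using H
  set x : ↥(JP n m b) := ⟨c, hc⟩ with hx_def
  have hgx : (g x).1 = i ∧ (g x).2 = v := by
    apply D_inj hb (hg1 x) hval
    rw [← hg2 x]
    exact hrep
  apply le_antisymm
  · -- upper bound via strictly antitone map to ℕ
    set f : ↥(JP n m b) → ℕᵒᵈ := fun y =>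
      OrderDual.toDual ((n - (m - 1 - (g y).1.1) - (g y).2) + (g y).1.1) with hf_def
    have hf : StrictMono f := by
      intro y y' hyy
      have hlt : D b (g y).1 (g y).2 < D b (g y').1 (g y').2 := by
        rw [← hg2 y, ← hg2 y']
        exact Subtype.coe_lt_coe.mpr (Subtype.coe_lt_coe.mpr hyy)
      have h3 := (D_lt_D hb (hg1 y) (hg1 y')).mp hlt
      have h4 := (hg1 y).2
      have h5 := (hg1 y').2
      have h6 := (g y).1.2
      have h7 := (g y').1.2
      show OrderDual.toDual _ < OrderDual.toDual _
      rw [OrderDual.toDual_lt_toDual]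
      omega
    have hle := Order.coheight_le_coheight_apply_of_strictMono f hf x
    have hfx : f x = OrderDual.toDual (p + q) := by
      rw [hf_def]
      simp only
      congr 1
      rw [hgx.1, hgx.2]
      omega
    rw [hfx] at hle
    rwa [Order.coheight_toDual, Order.height_nat] at hle
  · -- lower bound via explicit chain
    -- index and value at position k
    have hvalid : ∀ k, k ≤ p + q → Valid n b ⟨i.1 - (k - p), by omega⟩
        (min (v + k) (n - (m - 1 - (i.1 - (k - p))))) := by
      intro k hk
      have hbgap : b ⟨i.1 - (k - p), by omega⟩ + (i.1 - (i.1 - (k - p))) ≤ b i := by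
        have := gap hb.1 ⟨i.1 - (k - p), by omega⟩ i
          (by rw [Fin.le_def]; simp only [Fin.val_mk]; omega)
        simpa using this
      constructor
      · show b _ < min (v + k) (n - (m - 1 - (i.1 - (k - p))))
        omega
      · show min (v + k) (n - (m - 1 - (i.1 - (k - p)))) + (m - 1 - (i.1 - (k - p))) ≤ n
        omega
    let F : Fin (p + q + 1) → ↥(JP n m b) := fun k =>
      ⟨⟨D b ⟨i.1 - (k.1 - p), by omega⟩ (min (v + k.1) (n - (m - 1 - (i.1 - (k.1 - p))))),
        D_mem hb (hvalid k.1 (by omega))⟩,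
        D_joinirr hb (hvalid k.1 (by omega))⟩
    have hstep : ∀ l : Fin (p + q), F l.castSucc < F l.succ := by
      intro l
      have hl := l.2
      show (⟨⟨D b _ _, _⟩, _⟩ : ↥(JP n m b)) < ⟨⟨D b _ _, _⟩, _⟩
      apply Subtype.coe_lt_coe.mp
      apply Subtype.coe_lt_coe.mp
      apply (D_lt_D hb (hvalid l.castSucc.1 (by simp only [Fin.coe_castSucc]; omega))
        (hvalid l.succ.1 (by simp only [Fin.val_succ]; omega))).mpr
      show i.1 - (l.1 + 1 - p) ≤ i.1 - (l.1 - p) ∧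
        min (v + l.1) (n - (m - 1 - (i.1 - (l.1 - p)))) ≤
          min (v + (l.1 + 1)) (n - (m - 1 - (i.1 - (l.1 + 1 - p)))) +
            ((i.1 - (l.1 - p)) - (i.1 - (l.1 + 1 - p))) ∧
        ((i.1 - (l.1 + 1 - p)) < (i.1 - (l.1 - p)) ∨
          min (v + l.1) (n - (m - 1 - (i.1 - (l.1 - p)))) <
            min (v + (l.1 + 1)) (n - (m - 1 - (i.1 - (l.1 + 1 - p)))))
      refine ⟨by omega, by omega, by omega⟩
    let ser : LTSeries ↥(JP n m b) := ⟨p + q, F, hstep⟩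
    have hhead : ser.head = x := by
      show F 0 = x
      rw [hx_def]
      apply Subtype.ext
      apply Subtype.ext
      show D b ⟨i.1 - ((0 : Fin (p+q+1)).1 - p), _⟩
          (min (v + (0 : Fin (p+q+1)).1) (n - (m - 1 - (i.1 - ((0 : Fin (p+q+1)).1 - p))))) = (c : Fin m → ℕ)
      rw [hrep]
      have ei : (⟨i.1 - ((0 : Fin (p+q+1)).1 - p), by omega⟩ : Fin m) = i := Fin.ext (by simp)
      have ev : min (v + ((0 : Fin (p+q+1)).1 : ℕ))
          (n - (m - 1 - (i.1 - (((0 : Fin (p+q+1)).1 : ℕ) - p)))) = v := by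
        simp only [Fin.val_zero]
        omega
      rw [ev, ei]
    have := Order.length_le_coheight_head (p := ser)
    rw [hhead] at this
    exact_mod_cast this
end

section
/- Let {i : b_i + 1 < b_{i+1} and b_i < n} = {l_1 < l_2 < ... < l_u}, where b_{m+1} := n + 1. Then the minimal elements of the poset P of join-irreducible elements of Γ(X;γ) are exactly the tuples obtained from [b_1,...,b_m] by replacing b_{l_j} with b_{l_j} + 1, for j = 1,...,u. -/
/-- `l` is one of the indices `l_1, …, l_u`, i.e. `b l + 1 < b (l+1)` (with the
convention `b (m+1) = n + 1`) and `b l < n`. -/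
def GapIdx (n m : ℕ) (b : Fin m → ℕ) (l : Fin m) : Prop :=
  b l < n ∧ ∀ j : Fin m, j.1 = l.1 + 1 → b l + 1 < b j

/-!
`γ` is the least element of `Γ(X;γ)`: it covers nothing, every atom covers exactly `γ`, and every
other element lies above an atom, so the minimal join-irreducible elements are exactly the atoms.
Raising `b_l` by one at a gap index `l` gives an atom; conversely, for `c ≠ γ` the last coordinate
`l` at which `c` exceeds `γ` is a gap index, and the atom at `l` lies below `c`.
-/

theorem minimal_existsUnique_covBy_iff_covBy {α : Type*} [PartialOrder α] {a c : α}
    (ha : IsBot a) (hatomic : ∀ x, x ≠ a → ∃ y, a ⋖ y ∧ y ≤ x) :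
    Minimal (fun x => ∃! y, y ⋖ x) c ↔ a ⋖ c := by
  have existsUnique_of_covBy : ∀ {x}, a ⋖ x → ∃! y, y ⋖ x := fun hx =>
    ⟨a, hx, fun y hy => (hx.eq_or_eq (ha y) hy.le).resolve_right hy.ne⟩
  have ne_of_existsUnique : ∀ {x}, (∃! y, y ⋖ x) → x ≠ a := by
    rintro x ⟨y, hy, -⟩ rfl
    exact (ha y).not_gt hy.lt
  constructor
  · rintro ⟨hc, hmin⟩
    obtain ⟨y, hay, hyc⟩ := hatomic c (ne_of_existsUnique hc)
    rwa [(hmin (existsUnique_of_covBy hay) hyc).antisymm hyc]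
  · intro hac
    refine ⟨existsUnique_of_covBy hac, fun y hy hyc => ?_⟩
    exact ((hac.eq_or_eq (ha y) hyc).resolve_left (ne_of_existsUnique hy)).ge

theorem covBy_update_add_one {ι : Type*} [DecidableEq ι] (b : ι → ℕ) (l : ι) :
    b ⋖ Function.update b l (b l + 1) :=
  Pi.covBy_iff_exists_right_eq.2 ⟨l, _, Order.covBy_add_one _, rfl⟩

section GammaF

variable {n m : ℕ} {b : Fin m → ℕ}

theorem update_add_one_mem_gammaF (hb : b ∈ Gamma n m) {l : Fin m} (hl : GapIdx n m b l) :
    Function.update b l (b l + 1) ∈ GammaF n m b := by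
  refine ⟨⟨fun i j hij => ?_, fun i => ?_⟩, (covBy_update_add_one b l).le⟩
  · by_cases hil : i = l
    · subst hil
      have hsucc : i.1 + 1 < m := by omega
      have hgap : b i + 1 < b ⟨i.1 + 1, hsucc⟩ := hl.2 _ rfl
      have hmono : b ⟨i.1 + 1, hsucc⟩ ≤ b j := hb.1.monotone (Fin.le_def.2 hij)
      rw [Function.update_self, Function.update_of_ne hij.ne']
      omega
    · rw [Function.update_of_ne hil]
      exact (hb.1 hij).trans_le ((covBy_update_add_one b l).le j)
  · by_cases hil : i = l
    · subst hil
      rw [Function.update_self]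
      exact ⟨by omega, hl.1⟩
    · rw [Function.update_of_ne hil]
      exact hb.2 i

theorem exists_gapIdx_update_add_one_le {c : Fin m → ℕ} (hc : c ∈ GammaF n m b) (hne : c ≠ b) :
    ∃ l, GapIdx n m b l ∧ Function.update b l (b l + 1) ≤ c := by
  have hS : (Finset.univ.filter fun i => b i < c i).Nonempty := by
    by_contra hS
    rw [Finset.not_nonempty_iff_eq_empty, Finset.filter_eq_empty_iff] at hS
    exact hne (funext fun i => le_antisymm (not_lt.1 (hS (Finset.mem_univ i))) (hc.2 i))
  obtain ⟨l, hlS, hlast⟩ : ∃ l, b l < c l ∧ ∀ j, b j < c j → j ≤ l :=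
    ⟨_, (Finset.mem_filter.1 (Finset.max'_mem _ hS)).2,
      fun j hj => Finset.le_max' _ j (Finset.mem_filter.2 ⟨Finset.mem_univ j, hj⟩)⟩
  refine ⟨l, ⟨hlS.trans_le (hc.1.2 l).2, fun j hj => ?_⟩,
    update_le_iff.2 ⟨hlS, fun j _ => hc.2 j⟩⟩
  have hlj : l < j := Fin.lt_def.2 (by omega)
  have hcj : c j = b j := le_antisymm (not_lt.1 fun h => (hlast j h).not_gt hlj) (hc.2 j)
  have hclj : c l < c j := hc.1.1 hlj
  omega

theorem gammaF_bot_covBy_iff (hb : b ∈ Gamma n m) {c : GammaF n m b} :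
    (⟨b, hb, le_rfl⟩ : GammaF n m b) ⋖ c ↔
      ∃ l, GapIdx n m b l ∧ (c : Fin m → ℕ) = Function.update b l (b l + 1) := by
  constructor
  · intro hbc
    have hne : (c : Fin m → ℕ) ≠ b := fun h => hbc.lt.ne' (Subtype.ext h)
    obtain ⟨l, hl, hle⟩ := exists_gapIdx_update_add_one_le c.2 hne
    let a : GammaF n m b := ⟨_, update_add_one_mem_gammaF hb hl⟩
    have hba : (⟨b, hb, le_rfl⟩ : GammaF n m b) < a := (covBy_update_add_one b l).lt
    exact ⟨l, hl, congrArg Subtype.val ((hbc.eq_or_eq hba.le hle).resolve_left hba.ne').symm⟩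
  · rintro ⟨l, -, hc⟩
    apply CovBy.of_image (OrderEmbedding.subtype _)
    simpa [hc] using covBy_update_add_one b l

end GammaF

theorem stmt7_general (n m : ℕ) (b : Fin m → ℕ)
    (hb : b ∈ Gamma n m) (c : ↥(GammaF n m b)) :
    Minimal (· ∈ JP n m b) c ↔
      ∃ l : Fin m, GapIdx n m b l ∧
        (c : Fin m → ℕ) = Function.update b l (b l + 1) := by
  rw [← gammaF_bot_covBy_iff hb]
  refine minimal_existsUnique_covBy_iff_covBy (fun x => x.2.2) fun x hx => ?_
  obtain ⟨l, hl, hle⟩ := exists_gapIdx_update_add_one_le x.2 fun h => hx (Subtype.ext h)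
  exact ⟨⟨_, update_add_one_mem_gammaF hb hl⟩, gammaF_bot_covBy_iff hb |>.2 ⟨l, hl, rfl⟩, hle⟩

theorem stmt7 (n m : ℕ) (hm : 1 ≤ m) (hmn : m ≤ n) (b : Fin m → ℕ)
    (hb : b ∈ Gamma n m) (c : ↥(GammaF n m b)) :
    Minimal (· ∈ JP n m b) c ↔
      ∃ l : Fin m, GapIdx n m b l ∧
        (c : Fin m → ℕ) = Function.update b l (b l + 1) :=
  stmt7_general n m b hb c
end

section
/- With notation as above, the minimal element of P obtained by replacing b_{l_j} with b_{l_j} + 1 in [b_1,...,b_m] has coheight n - m - b_{l_j} + 2 l_j - 2 in P. -/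
/-! ### Auxiliary lemmas -/

section Aux

variable {n m : ℕ} {b : Fin m → ℕ}

lemma flt {m : ℕ} {i j : Fin m} (h : i.1 < j.1) : i < j := by rwa [Fin.lt_def]

lemma adj_add {f : Fin m → ℕ}
    (h : ∀ j : Fin m, ∀ hj : j.1 + 1 < m, f j + 1 ≤ f ⟨j.1 + 1, hj⟩) :
    ∀ (k : ℕ) (a c : Fin m), a.1 + k = c.1 → f a + k ≤ f c := by
  intro k
  induction k with
  | zero =>
    intro a c hac
    have : a = c := Fin.ext (by omega)
    subst this; omega
  | succ k ih =>
    intro a c hac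
    have hc := c.2
    have hb' : a.1 + k < m := by omega
    have h1 := ih a ⟨a.1 + k, hb'⟩ rfl
    have h2 := h ⟨a.1 + k, hb'⟩ (show a.1 + k + 1 < m by omega)
    have h3 : (⟨a.1 + k + 1, show a.1 + k + 1 < m by omega⟩ : Fin m) = c :=
      Fin.ext (show a.1 + k + 1 = c.1 by omega)
    rw [h3] at h2
    omega

lemma sm_add {f : Fin m → ℕ} (hf : StrictMono f) {a c : Fin m} (k : ℕ) (h : a.1 + k = c.1) :
    f a + k ≤ f c :=
  adj_add (fun j hj => hf (a := j) (b := ⟨j.1 + 1, hj⟩) (flt (by simp))) k a c h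

lemma sm_of_adj {f : Fin m → ℕ}
    (h : ∀ j : Fin m, ∀ hj : j.1 + 1 < m, f j < f ⟨j.1 + 1, hj⟩) : StrictMono f := by
  intro a c hac
  rw [Fin.lt_def] at hac
  have := adj_add (f := f) (fun j hj => h j hj) (c.1 - a.1) a c (by omega)
  omega

lemma val_le {d : Fin m → ℕ} (hd : IsTup n m d) (i : Fin m) : d i + (m - 1 - i.1) ≤ n := by
  have hi := i.2
  have h1 := sm_add hd.1 (a := i) (c := ⟨m - 1, by omega⟩) (m - 1 - i.1)
    (show i.1 + (m - 1 - i.1) = m - 1 by omega)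
  have h2 := (hd.2 ⟨m - 1, by omega⟩).2
  omega

lemma val_ge {d : Fin m → ℕ} (hd : IsTup n m d) (i : Fin m) : i.1 + 1 ≤ d i := by
  have hi := i.2
  have h1 := sm_add hd.1 (a := ⟨0, by omega⟩) (c := i) i.1 (by simp)
  have h2 := (hd.2 ⟨0, by omega⟩).1
  omega

/-- the unique candidate lower cover: decrease coordinate `i` by one. -/
def dn {m : ℕ} (d : Fin m → ℕ) (i : Fin m) : Fin m → ℕ := Function.update d i (d i - 1)

lemma dn_apply_ne {d : Fin m → ℕ} {i j : Fin m} (h : j ≠ i) : dn d i j = d j :=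
  Function.update_of_ne h _ _

lemma dn_apply_self {d : Fin m → ℕ} {i : Fin m} : dn d i i = d i - 1 :=
  Function.update_self _ _ _

lemma good_dn_mem {d : Fin m → ℕ} (hd : d ∈ GammaF n m b) {i : Fin m} (hg : Good b d i) :
    dn d i ∈ GammaF n m b := by
  obtain ⟨⟨hsm, hbnd⟩, hbd⟩ := hd
  obtain ⟨hg1, hg2⟩ := hg
  have hd2 : 2 ≤ d i := by unfold prev at hg2; split at hg2 <;> omega
  refine ⟨⟨?_, ?_⟩, ?_⟩
  · apply sm_of_adj
    intro j hj
    by_cases h1 : j = i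
    · subst h1
      rw [dn_apply_self, dn_apply_ne (by simp [Fin.ext_iff])]
      have h4 := hsm (a := j) (b := ⟨j.1 + 1, hj⟩) (flt (by simp))
      omega
    · by_cases h2 : (⟨j.1 + 1, hj⟩ : Fin m) = i
      · rw [dn_apply_ne h1, h2, dn_apply_self]
        have hprev : prev d i = d j := by
          unfold prev
          rw [dif_neg (by rw [← h2]; simp)]
          congr 1
          rw [← h2]
          exact Fin.ext (by simp)
        rw [hprev] at hg2
        omega
      · rw [dn_apply_ne h1, dn_apply_ne h2]
        exact hsm (flt (by simp))
  · intro j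
    by_cases h1 : j = i
    · subst h1
      rw [dn_apply_self]
      have h4 := (hbnd j).2
      have h5 := (hbnd j).1
      exact ⟨by omega, by omega⟩
    · rw [dn_apply_ne h1]; exact hbnd j
  · intro j
    show b j ≤ dn d i j
    by_cases h1 : j = i
    · subst h1
      rw [dn_apply_self]
      omega
    · rw [dn_apply_ne h1]
      exact hbd j

lemma good_dn_covby {d : Fin m → ℕ} (hd : d ∈ GammaF n m b) {i : Fin m} (hg : Good b d i) :
    (⟨dn d i, good_dn_mem hd hg⟩ : ↥(GammaF n m b)) ⋖ ⟨d, hd⟩ := by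
  have hd1 : 1 ≤ d i := (hd.1.2 i).1
  constructor
  · rw [Subtype.mk_lt_mk]
    apply lt_of_le_of_ne
    · intro j
      show dn d i j ≤ d j
      by_cases h1 : j = i
      · subst h1; rw [dn_apply_self]; omega
      · rw [dn_apply_ne h1]
    · intro hEq
      have hcf : d i - 1 = d i := by
        have h0 := congrFun hEq i
        rwa [dn_apply_self] at h0
      omega
  · rintro ⟨w, hw⟩ h1 h2
    rw [Subtype.mk_lt_mk] at h1 h2
    have hle1 : ∀ j, dn d i j ≤ w j := fun j => h1.le j
    have hle2 : ∀ j, w j ≤ d j := fun j => h2.le j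
    by_cases hwi : w i = d i
    · apply h2.ne
      funext j
      by_cases h3 : j = i
      · subst h3; exact hwi
      · have ha : d j ≤ w j := by
          have h4 := hle1 j
          rwa [dn_apply_ne h3] at h4
        exact le_antisymm (hle2 j) ha
    · apply h1.ne'
      funext j
      by_cases h3 : j = i
      · subst h3
        rw [dn_apply_self]
        have ha : d j - 1 ≤ w j := by
          have h4 := hle1 j
          rwa [dn_apply_self] at h4
        have hb2 := hle2 j
        omega
      · rw [dn_apply_ne h3]
        have ha : d j ≤ w j := by
          have h4 := hle1 j
          rwa [dn_apply_ne h3] at h4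
        exact le_antisymm (hle2 j) ha

lemma cover_good {d : Fin m → ℕ} (hd : d ∈ GammaF n m b) {y : ↥(GammaF n m b)}
    (hy : y ⋖ (⟨d, hd⟩ : ↥(GammaF n m b))) :
    ∃ i, Good b d i ∧ (y : Fin m → ℕ) = dn d i := by
  classical
  obtain ⟨w, hw⟩ := y
  have hlt : w < d := by
    have h0 := hy.1
    rwa [Subtype.mk_lt_mk] at h0
  have hle : ∀ j, w j ≤ d j := fun j => hlt.le j
  have hne : w ≠ d := hlt.ne
  have hbw : ∀ j, b j ≤ w j := fun j => hw.2 j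
  have hex : (Finset.univ.filter fun j : Fin m => w j < d j).Nonempty := by
    by_contra h
    rw [Finset.not_nonempty_iff_eq_empty] at h
    apply hne
    funext j
    have hj : j ∉ Finset.univ.filter fun j : Fin m => w j < d j := by rw [h]; simp
    simp only [Finset.mem_filter, Finset.mem_univ, true_and, not_lt] at hj
    have hj2 := hle j
    omega
  set S := Finset.univ.filter fun j : Fin m => w j < d j with hS
  set i := S.min' hex with hidef
  have hiS : i ∈ S := S.min'_mem hex
  have hiw : w i < d i := by
    rw [hS] at hiS; simpa using hiS
  have hmin : ∀ j : Fin m, j < i → w j = d j := by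
    intro j hj
    by_contra h
    have hjS : j ∈ S := by
      rw [hS]
      simp only [Finset.mem_filter, Finset.mem_univ, true_and]
      have hj2 := hle j
      omega
    have hle' := S.min'_le j hjS
    rw [← hidef] at hle'
    exact absurd hj (not_lt.mpr hle')
  have hgood : Good b d i := by
    constructor
    · have hbw' := hbw i; omega
    · unfold prev
      split
      · have hw1 := (hw.1.2 i).1
        have hbw' := hbw i
        omega
      · next h0 =>
        set j : Fin m := ⟨i.1 - 1, Nat.lt_of_le_of_lt (Nat.sub_le _ _) i.2⟩ with hjdef
        have hji : j < i := flt (by simp [hjdef]; omega)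
        have hm1 := hmin j hji
        have hm2 := hw.1.1 hji
        omega
  refine ⟨i, hgood, ?_⟩
  have hwle : w ≤ dn d i := by
    intro j
    show w j ≤ dn d i j
    by_cases h3 : j = i
    · subst h3; rw [dn_apply_self]; omega
    · rw [dn_apply_ne h3]; exact hle j
  by_contra hne2
  simp only at hne2
  have hlt2 : (⟨w, hw⟩ : ↥(GammaF n m b)) < ⟨dn d i, good_dn_mem hd hgood⟩ := by
    rw [Subtype.mk_lt_mk]
    exact lt_of_le_of_ne hwle hne2
  exact hy.2 hlt2 (good_dn_covby hd hgood).1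

lemma JI_iff (d : ↥(GammaF n m b)) :
    JoinIrr n m b d ↔ ∃! i, Good b (d : Fin m → ℕ) i := by
  obtain ⟨d, hd⟩ := d
  constructor
  · rintro ⟨y, hy, huniq⟩
    obtain ⟨i, hgi, hyi⟩ := cover_good hd hy
    refine ⟨i, hgi, ?_⟩
    intro j hgj
    have h2 := huniq ⟨dn d j, good_dn_mem hd hgj⟩ (good_dn_covby hd hgj)
    have h3 : dn d j = dn d i := by
      rw [← hyi]
      exact congrArg Subtype.val h2
    by_contra hne
    have h4 : d j - 1 = d j := by
      have h0 := congrFun h3 j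
      rwa [dn_apply_self, dn_apply_ne hne] at h0
    have h5 := (hd.1.2 j).1
    omega
  · rintro ⟨i, hgi, huniq⟩
    refine ⟨⟨dn d i, good_dn_mem hd hgi⟩, good_dn_covby hd hgi, ?_⟩
    intro y hy
    obtain ⟨j, hgj, hyj⟩ := cover_good hd hy
    have hji := huniq j hgj
    subst hji
    exact Subtype.ext hyj

lemma run_step (hbG : b ∈ Gamma n m) {d : Fin m → ℕ} (hd : d ∈ GammaF n m b) {i : Fin m}
    (huniq : ∀ j, Good b d j → j = i) {j : Fin m} (hji : j ≠ i) (hbj : b j < d j) :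
    j.1 ≠ 0 ∧ ∀ jp : Fin m, jp.1 + 1 = j.1 → d j = d jp + 1 ∧ b jp < d jp := by
  have hng : ¬ Good b d j := fun h => hji (huniq j h)
  have h2 : ¬ (prev d j + 1 < d j) := fun h => hng ⟨hbj, h⟩
  have hbj1 : 1 ≤ b j := (hbG.2 j).1
  constructor
  · intro h0
    unfold prev at h2
    rw [dif_pos h0] at h2
    omega
  · intro jp hjp
    have h0 : j.1 ≠ 0 := by omega
    have hprev : prev d j = d jp := by
      unfold prev
      rw [dif_neg h0]
      congr 1
      exact Fin.ext (show j.1 - 1 = jp.1 by omega)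
    rw [hprev] at h2
    have hsm : d jp < d j := hd.1.1 (flt (by omega))
    have hbm : b jp < b j := hbG.1 (flt (by omega))
    exact ⟨by omega, by omega⟩

lemma run (hbG : b ∈ Gamma n m) {d : Fin m → ℕ} (hd : d ∈ GammaF n m b) {i : Fin m}
    (huniq : ∀ j, Good b d j → j = i) :
    ∀ (N : ℕ) (j : Fin m), j.1 = N → b j < d j → i.1 ≤ j.1 ∧ d j + i.1 = d i + j.1 := by
  intro N
  induction N with
  | zero =>
    intro j hj hbj
    by_cases hji : j = i
    · subst hji; omega
    · exact absurd hj (run_step hbG hd huniq hji hbj).1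
  | succ N ih =>
    intro j hj hbj
    by_cases hji : j = i
    · subst hji; omega
    · obtain ⟨_, hstep⟩ := run_step hbG hd huniq hji hbj
      have hjm := j.2
      obtain ⟨h1, h2⟩ := hstep ⟨N, by omega⟩ (by simp [hj])
      obtain ⟨h3, h4⟩ := ih ⟨N, by omega⟩ rfl h2
      simp only at h3 h4
      omega

lemma g_mono_aux (hbG : b ∈ Gamma n m) {d d' : Fin m → ℕ}
    (hd : d ∈ GammaF n m b) (hd' : d' ∈ GammaF n m b)
    {i : Fin m} (hgi : Good b d i) (hui : ∀ j, Good b d j → j = i)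
    (hui' : ∀ j, Good b d' j → j = i)
    (hleP : ∀ j, d j ≤ d' j) (hvv : d i = d' i) :
    ∀ (N : ℕ) (j : Fin m), j.1 = N → d j = d' j := by
  intro N
  induction N using Nat.strong_induction_on with
  | _ N ihN =>
  intro j hjN
  by_cases hbj : b j < d j
  · obtain ⟨_, r1⟩ := run hbG hd hui j.1 j rfl hbj
    obtain ⟨_, r2⟩ := run hbG hd' hui' j.1 j rfl (lt_of_lt_of_le hbj (hleP j))
    omega
  · have hbd : b j ≤ d j := hd.2 j
    have hdj : d j = b j := by omega
    by_cases hbj' : b j < d' j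
    · exfalso
      have hji' : j ≠ i := by
        intro h'; subst h'
        exact hbj hgi.1
      obtain ⟨h0, hstep⟩ := run_step hbG hd' hui' hji' hbj'
      have hjm := j.2
      obtain ⟨s1, s2⟩ := hstep ⟨j.1 - 1, by omega⟩ (show j.1 - 1 + 1 = j.1 by omega)
      have hIH := ihN (j.1 - 1) (by omega) ⟨j.1 - 1, by omega⟩ rfl
      have hmono : d ⟨j.1 - 1, by omega⟩ < d j := hd.1.1 (flt (show j.1 - 1 < j.1 by omega))
      omega
    · have hbd' : b j ≤ d' j := hd'.2 j
      omega

lemma g_mono (hbG : b ∈ Gamma n m) {d d' : Fin m → ℕ}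
    (hd : d ∈ GammaF n m b) (hd' : d' ∈ GammaF n m b)
    {i i' : Fin m} (hgi : Good b d i) (hui : ∀ j, Good b d j → j = i)
    (hgi' : Good b d' i') (hui' : ∀ j, Good b d' j → j = i')
    (hle : d ≤ d') (hne : d ≠ d') :
    d i + 2 * i'.1 < d' i' + 2 * i.1 := by
  have hleP : ∀ j, d j ≤ d' j := fun j => hle j
  have hbi : b i < d' i := lt_of_lt_of_le hgi.1 (hleP i)
  obtain ⟨hii', heq⟩ := run hbG hd' hui' i.1 i rfl hbi
  rcases Nat.lt_or_ge i'.1 i.1 with hlt | hge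
  · have hli := hleP i
    omega
  · have hii : i' = i := Fin.ext (by omega)
    subst hii
    have hgoal : d i' < d' i' := by
      rcases Nat.lt_or_ge (d i') (d' i') with h | h
      · exact h
      · exfalso
        have hvv : d i' = d' i' := le_antisymm (hleP i') h
        exact hne (funext fun j => g_mono_aux hbG hd hd' hgi hui hui' hleP hvv j.1 j rfl)
    omega

end Aux

/-! ### The explicit chain -/

/-- `Av` is the number `A = n + l - m - b l`, the length of the first phase. -/
def Av (n m : ℕ) (b : Fin m → ℕ) (l : Fin m) : ℕ := (n + l.1) - (m + b l)

/-- the `k`-th element of the explicit maximal chain ascending from `c`. -/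
def Ee (n m : ℕ) (b : Fin m → ℕ) (l : Fin m) (k : ℕ) (j : Fin m) : ℕ :=
  if j.1 < l.1 ∧ k + j.1 < Av n m b l + l.1 then b j
  else max (b j) (min (n + 1 + j.1 - m) (b l + 1 + k + j.1 - l.1))

/-- the good index of `Ee k`. -/
def idx (n m : ℕ) (b : Fin m → ℕ) (l : Fin m) (k : ℕ) : Fin m :=
  ⟨min l.1 (l.1 + Av n m b l - k), by have := l.2; omega⟩

section Chain

variable {n m : ℕ} {b : Fin m → ℕ} {l : Fin m}

lemma cap_lt (hbG : b ∈ Gamma n m) (hl : GapIdx n m b l) :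
    ∀ j : Fin m, j.1 ≤ l.1 → b j + m ≤ n + j.1 := by
  intro j hj
  have h3 := sm_add hbG.1 (a := j) (c := l) (l.1 - j.1) (by omega)
  have hlm := l.2
  rcases Nat.lt_or_ge (l.1 + 1) m with h | h
  · have hg := hl.2 ⟨l.1 + 1, h⟩ rfl
    have h2 := val_le hbG ⟨l.1 + 1, h⟩
    have h2' : b ⟨l.1 + 1, h⟩ + (m - 1 - (l.1 + 1)) ≤ n := h2
    omega
  · have h1 := hl.1
    omega

lemma m_lt_n (hbG : b ∈ Gamma n m) (hl : GapIdx n m b l) : m < n := by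
  have hlm := l.2
  have h1 := cap_lt hbG hl ⟨0, by omega⟩ (Nat.zero_le _)
  have h2 := (hbG.2 ⟨0, by omega⟩).1
  have h1' : b ⟨0, by omega⟩ + m ≤ n + 0 := h1
  omega

lemma Av_def (hbG : b ∈ Gamma n m) (hl : GapIdx n m b l) :
    Av n m b l + (m + b l) = n + l.1 := by
  have := cap_lt hbG hl l le_rfl
  unfold Av
  omega

lemma Ee_val_lt (k : ℕ) {j : Fin m} (hj : j.1 < l.1) (hj2 : k + j.1 < Av n m b l + l.1) :
    Ee n m b l k j = b j := by
  unfold Ee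
  rw [if_pos ⟨hj, hj2⟩]

lemma Ee_val_ge (k : ℕ) {j : Fin m} (hj : ¬ (j.1 < l.1 ∧ k + j.1 < Av n m b l + l.1)) :
    Ee n m b l k j = max (b j) (min (n + 1 + j.1 - m) (b l + 1 + k + j.1 - l.1)) := by
  unfold Ee
  rw [if_neg hj]

lemma idx_val (k : ℕ) : (idx n m b l k).1 = min l.1 (l.1 + Av n m b l - k) := rfl

lemma Ee_val_lt_idx (k : ℕ) {j : Fin m} (hj : j.1 < (idx n m b l k).1) :
    Ee n m b l k j = b j := by
  rw [idx_val] at hj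
  exact Ee_val_lt k (by omega) (by omega)

lemma Ee_mem (hbG : b ∈ Gamma n m) (hl : GapIdx n m b l) (k : ℕ) :
    Ee n m b l k ∈ GammaF n m b := by
  have hmn := m_lt_n hbG hl
  refine ⟨⟨?_, ?_⟩, ?_⟩
  · apply sm_of_adj
    intro j hj
    have hbm : b j < b ⟨j.1 + 1, hj⟩ := hbG.1 (flt (by simp))
    have hj1 : (⟨j.1 + 1, hj⟩ : Fin m).1 = j.1 + 1 := rfl
    unfold Ee
    split <;> split <;> omega
  · intro j
    have h1 := (hbG.2 j).1
    have h2 := (hbG.2 j).2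
    have h3 := j.2
    unfold Ee
    split <;> exact ⟨by omega, by omega⟩
  · intro j
    show b j ≤ Ee n m b l k j
    unfold Ee
    split <;> omega
  
lemma Ee_zero (hbG : b ∈ Gamma n m) (hl : GapIdx n m b l) :
    Ee n m b l 0 = Function.update b l (b l + 1) := by
  have hcapl := cap_lt hbG hl l le_rfl
  have hmn := m_lt_n hbG hl
  funext j
  rcases lt_trichotomy j.1 l.1 with h | h | h
  · rw [Ee_val_lt 0 h (by omega), Function.update_of_ne (by simp [Fin.ext_iff]; omega)]
  · have hjl : j = l := Fin.ext h
    subst hjl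
    rw [Ee_val_ge 0 (by omega), Function.update_self]
    omega
  · rw [Ee_val_ge 0 (by omega), Function.update_of_ne (by simp [Fin.ext_iff]; omega)]
    have hjm := j.2
    have hg := hl.2 ⟨l.1 + 1, by omega⟩ rfl
    have h3 := sm_add hbG.1 (a := ⟨l.1 + 1, by omega⟩) (c := j) (j.1 - l.1 - 1)
      (show l.1 + 1 + (j.1 - l.1 - 1) = j.1 by omega)
    omega

lemma Ee_good (hbG : b ∈ Gamma n m) (hl : GapIdx n m b l) (k : ℕ) (hk : k ≤ Av n m b l + l.1) :
    Good b (Ee n m b l k) (idx n m b l k) ∧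
      ∀ j, Good b (Ee n m b l k) j → j = idx n m b l k := by
  have hmn := m_lt_n hbG hl
  have hAd := Av_def hbG hl
  set i := idx n m b l k with hidef
  have hi1 : i.1 = min l.1 (l.1 + Av n m b l - k) := rfl
  have hil : i.1 ≤ l.1 := by omega
  have hcapi := cap_lt hbG hl i hil
  have hcapl := cap_lt hbG hl l le_rfl
  have hbl1 : l.1 + 1 ≤ b l := val_ge hbG l
  have hbi : b i + (l.1 - i.1) ≤ b l := sm_add hbG.1 (l.1 - i.1) (by omega)
  have hvi : Ee n m b l k i = min (b l + 1 + k) (n + 1 + i.1 - m) := by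
    rw [Ee_val_ge k (by omega)]
    omega
  have hgood : Good b (Ee n m b l k) i := by
    constructor
    · rw [hvi]
      omega
    · unfold prev
      split
      · next h0 =>
        rw [hvi]
        omega
      · next h0 =>
        have him := i.2
        have hprevlt : (⟨i.1 - 1, Nat.lt_of_le_of_lt (Nat.sub_le _ _) i.2⟩ : Fin m).1 < i.1 := by
          show i.1 - 1 < i.1
          omega
        rw [hvi, Ee_val_lt_idx k hprevlt]
        have hcapim := cap_lt hbG hl ⟨i.1 - 1, Nat.lt_of_le_of_lt (Nat.sub_le _ _) i.2⟩
          (show i.1 - 1 ≤ l.1 by omega)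
        have hcapim' : b ⟨i.1 - 1, Nat.lt_of_le_of_lt (Nat.sub_le _ _) i.2⟩ + m ≤ n + (i.1 - 1) :=
          hcapim
        have hbm : b ⟨i.1 - 1, Nat.lt_of_le_of_lt (Nat.sub_le _ _) i.2⟩ < b i :=
          hbG.1 (flt (by show i.1 - 1 < i.1; omega))
        omega
  refine ⟨hgood, ?_⟩
  intro j hgj
  by_contra hne
  rcases lt_trichotomy j.1 i.1 with h | h | h
  · have hx := hgj.1
    rw [Ee_val_lt_idx k h] at hx
    exact absurd hx (lt_irrefl _)
  · exact hne (Fin.ext h)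
  · have hj0 : j.1 ≠ 0 := by omega
    have hjm := j.2
    have hgj1 := hgj.1
    have hgj2 := hgj.2
    have hprev : prev (Ee n m b l k) j
        = Ee n m b l k ⟨j.1 - 1, Nat.lt_of_le_of_lt (Nat.sub_le _ _) j.2⟩ := by
      unfold prev
      rw [dif_neg hj0]
    rw [hprev] at hgj2
    have hvj : Ee n m b l k j
        = max (b j) (min (n + 1 + j.1 - m) (b l + 1 + k + j.1 - l.1)) :=
      Ee_val_ge k (by omega)
    have hvjm : Ee n m b l k ⟨j.1 - 1, Nat.lt_of_le_of_lt (Nat.sub_le _ _) j.2⟩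
        = max (b ⟨j.1 - 1, Nat.lt_of_le_of_lt (Nat.sub_le _ _) j.2⟩)
            (min (n + 1 + (j.1 - 1) - m) (b l + 1 + k + (j.1 - 1) - l.1)) :=
      Ee_val_ge k (by show ¬ (j.1 - 1 < l.1 ∧ k + (j.1 - 1) < Av n m b l + l.1); omega)
    have hbm : b ⟨j.1 - 1, Nat.lt_of_le_of_lt (Nat.sub_le _ _) j.2⟩ < b j :=
      hbG.1 (flt (by show j.1 - 1 < j.1; omega))
    rw [hvj] at hgj1
    rw [hvj, hvjm] at hgj2
    omega

lemma Ee_le (hbG : b ∈ Gamma n m) (hl : GapIdx n m b l) (k : ℕ) :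
    Ee n m b l k ≤ Ee n m b l (k + 1) := by
  intro j
  show Ee n m b l k j ≤ Ee n m b l (k + 1) j
  unfold Ee
  split <;> split <;> omega

lemma Ee_lt (hbG : b ∈ Gamma n m) (hl : GapIdx n m b l) (k : ℕ) (hk : k < Av n m b l + l.1) :
    Ee n m b l k < Ee n m b l (k + 1) := by
  have hmn := m_lt_n hbG hl
  have hAd := Av_def hbG hl
  apply lt_of_le_of_ne (Ee_le hbG hl k)
  intro hEq
  rcases Nat.lt_or_ge k (Av n m b l) with hkA | hkA
  · have h1 : Ee n m b l k l = Ee n m b l (k + 1) l := congrFun hEq l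
    rw [Ee_val_ge k (by omega), Ee_val_ge (k + 1) (by omega)] at h1
    have hcapl := cap_lt hbG hl l le_rfl
    omega
  · have hlm := l.2
    have hjlt : (⟨l.1 + Av n m b l - (k + 1), by omega⟩ : Fin m).1 < (idx n m b l k).1 := by
      rw [idx_val]
      show l.1 + Av n m b l - (k + 1) < min l.1 (l.1 + Av n m b l - k)
      omega
    have h1 : Ee n m b l k ⟨l.1 + Av n m b l - (k + 1), by omega⟩
        = Ee n m b l (k + 1) ⟨l.1 + Av n m b l - (k + 1), by omega⟩ := congrFun hEq _
    rw [Ee_val_lt_idx k hjlt, Ee_val_ge (k + 1)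
      (by show ¬ (l.1 + Av n m b l - (k + 1) < l.1 ∧ (k + 1) + (l.1 + Av n m b l - (k + 1)) < Av n m b l + l.1); omega)] at h1
    have hcapj := cap_lt hbG hl ⟨l.1 + Av n m b l - (k + 1), by omega⟩
      (show l.1 + Av n m b l - (k + 1) ≤ l.1 by omega)
    have hcapj' : b ⟨l.1 + Av n m b l - (k + 1), by omega⟩ + m ≤ n + (l.1 + Av n m b l - (k + 1)) :=
      hcapj
    have hbl1 : l.1 + 1 ≤ b l := val_ge hbG l
    omega

end Chain

theorem stmt8 (n m : ℕ) (hm : 1 ≤ m) (hmn : m ≤ n) (b : Fin m → ℕ)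
    (hb : b ∈ Gamma n m) (l : Fin m) (hl : GapIdx n m b l)
    (c : ↥(GammaF n m b)) (hc : c ∈ JP n m b)
    (hcl : (c : Fin m → ℕ) = Function.update b l (b l + 1)) :
    -- the coheight is `n - m - b l + 2 (l+1) - 2` (1-based index `l+1`),
    -- stated additively to avoid truncated subtraction:
    Order.coheight (⟨c, hc⟩ : ↥(JP n m b)) + ((m + b l : ℕ) : ℕ∞) =
      ((n + 2 * l.1 : ℕ) : ℕ∞) := by
  classical
  have hmltn := m_lt_n hb hl
  have hAd := Av_def hb hl
  have hcoh : Order.coheight (⟨c, hc⟩ : ↥(JP n m b)) = ((Av n m b l + l.1 : ℕ) : ℕ∞) := by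
    apply le_antisymm
    · -- upper bound via the rank function G
      have hux : ∀ x : ↥(JP n m b), ∃! i, Good b (x.1 : Fin m → ℕ) i :=
        fun x => (JI_iff x.1).mp x.2
      set ix : ↥(JP n m b) → Fin m := fun x => (hux x).choose with hixdef
      have hix1 : ∀ x, Good b (x.1 : Fin m → ℕ) (ix x) := fun x => (hux x).choose_spec.1
      have hix2 : ∀ x j, Good b (x.1 : Fin m → ℕ) j → j = ix x :=
        fun x j h => (hux x).choose_spec.2 j h
      set G : ↥(JP n m b) → ℤ :=
        fun x => ((x.1 : Fin m → ℕ) (ix x) : ℤ) - 2 * (ix x).1 with hGdef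
      have hGmono : ∀ x y : ↥(JP n m b), x < y → G x < G y := by
        intro x y hxy
        have hlt : (x.1 : Fin m → ℕ) < (y.1 : Fin m → ℕ) := by
          rw [← Subtype.coe_lt_coe] at hxy
          exact_mod_cast hxy
        have hle : (x.1 : Fin m → ℕ) ≤ (y.1 : Fin m → ℕ) := hlt.le
        have hne : (x.1 : Fin m → ℕ) ≠ (y.1 : Fin m → ℕ) := hlt.ne
        have hkey := g_mono hb x.1.2 y.1.2 (hix1 x) (hix2 x) (hix1 y) (hix2 y) hle hne
        simp only [hGdef]
        omega
      apply Order.coheight_le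
      intro p hp
      have hstep : ∀ t : ℕ, ∀ ht : t ≤ p.length, G p.head + t ≤ G (p ⟨t, by omega⟩) := by
        intro t
        induction t with
        | zero => intro ht; simp [RelSeries.head]
        | succ t ih =>
          intro ht
          have h1 := ih (by omega)
          have h2 : (⟨t, by omega⟩ : Fin (p.length + 1)) < ⟨t + 1, by omega⟩ :=
            flt (by show t < t + 1; omega)
          have h3 := hGmono _ _ (p.strictMono h2)
          push_cast
          omega
      have hlast := hstep p.length le_rfl
      have hgoodl : Good b (c : Fin m → ℕ) l := by
        rw [hcl]
        constructor
        · rw [Function.update_self]; omega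
        · unfold prev
          split
          · rw [Function.update_self]
            have hb1 := (hb.2 l).1
            omega
          · next h0 =>
            have hlm := l.2
            rw [Function.update_self,
              Function.update_of_ne (by simp [Fin.ext_iff]; omega)]
            have hbm : b ⟨l.1 - 1, Nat.lt_of_le_of_lt (Nat.sub_le _ _) l.2⟩ < b l :=
              hb.1 (flt (by show l.1 - 1 < l.1; omega))
            omega
      have hixc : ix ⟨c, hc⟩ = l := (hix2 ⟨c, hc⟩ l hgoodl).symm
      have hGhead : G p.head = (b l + 1 : ℤ) - 2 * l.1 := by
        rw [hp]
        simp only [hGdef]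
        rw [hixc, hcl, Function.update_self]
        push_cast
        ring
      set x := p ⟨p.length, by omega⟩ with hxdef
      have hvb := val_le x.1.2.1 (ix x)
      have hib : (ix x).1 < m := (ix x).2
      have hGlast : G x ≤ (n : ℤ) + 1 - m := by
        simp only [hGdef]
        omega
      rw [hGhead] at hlast
      have hlen : p.length ≤ Av n m b l + l.1 := by omega
      exact_mod_cast hlen
    · -- lower bound via the explicit chain
      set p : LTSeries ↥(JP n m b) :=
        { length := Av n m b l + l.1
          toFun := fun j => ⟨⟨Ee n m b l j.1, Ee_mem hb hl j.1⟩,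
            (JI_iff _).mpr ⟨idx n m b l j.1,
              (Ee_good hb hl j.1 (by have := j.2; omega)).1,
              (Ee_good hb hl j.1 (by have := j.2; omega)).2⟩⟩
          step := by
            intro j
            show (_ : ↥(JP n m b)) < _
            change Ee n m b l (j.castSucc : ℕ) < Ee n m b l (j.succ : ℕ)
            simp only [Fin.coe_castSucc, Fin.val_succ]
            exact Ee_lt hb hl j.1 j.2 } with hpdef
      have hphead : p.head = (⟨c, hc⟩ : ↥(JP n m b)) := by
        apply Subtype.ext
        apply Subtype.ext
        show Ee n m b l 0 = (c : Fin m → ℕ)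
        rw [Ee_zero hb hl, hcl]
      have hlb := Order.length_le_coheight (le_of_eq hphead.symm)
      simpa [hpdef] using hlb
  rw [hcoh]
  have heq : (Av n m b l + l.1) + (m + b l) = n + 2 * l.1 := by omega
  exact_mod_cast congrArg (Nat.cast : ℕ → ℕ∞) heq
end

section
/- Let c = [c_1,...,c_m] ∈ Γ(X;γ). Then the number of elements of Γ(X;γ) covered by c equals the number of indices i ∈ {1,...,m} with c_i > b_i and c_i > c_{i-1} + 1 (c_0 := 0). In particular, c is the minimum element γ iff there is no such index, and c is join-irreducible iff there is exactly one. -/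
/-!
The elements covered by `c` are exactly the tuples obtained by lowering one entry `c i` by one,
and such a lowering stays in `Γ(X;γ)` precisely when `i` is good. Conversely, if `y < c` in
`Γ(X;γ)`, then at the first index `i` where `y` and `c` differ we have
`c (i-1) = y (i-1) < y i < c i`, so `i` is good and `y` lies below the lowering of `c` at `i`.
Applied to `y = γ`, the same argument shows that `c ≠ γ` has a good index.
-/

lemma existsUnique_iff_ncard_eq_one {α : Type*} {p : α → Prop} :
    (∃! x, p x) ↔ {x | p x}.ncard = 1 := by
  simp only [Set.ncard_eq_one, Set.eq_singleton_iff_unique_mem, Set.mem_ofPred_eq, ExistsUnique]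

variable {n m : ℕ}

lemma le_prev_of_lt {c : Fin m → ℕ} (hc : Monotone c) {i j : Fin m} (hji : j < i) :
    c j ≤ prev c i := by
  have hi : i.1 ≠ 0 := by omega
  rw [prev, dif_neg hi]
  exact hc (Fin.le_def.2 (by simp; omega))

lemma prev_lt_self {c : Fin m → ℕ} (hc : IsTup n m c) (i : Fin m) : prev c i < c i := by
  unfold prev
  split_ifs with hi
  · exact (hc.2 i).1
  · exact hc.1 (Fin.lt_def.2 (by simp; omega))

lemma prev_congr {y c : Fin m → ℕ} {i : Fin m} (h : ∀ j < i, y j = c j) :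
    prev y i = prev c i := by
  unfold prev
  split_ifs with hi
  · rfl
  · exact h _ (Fin.lt_def.2 (by simp; omega))

def lowerAt (c : Fin m → ℕ) (i : Fin m) : Fin m → ℕ :=
  Function.update c i (c i - 1)

lemma lowerAt_covBy {c : Fin m → ℕ} {i : Fin m} (hi : 0 < c i) : lowerAt c i ⋖ c := by
  refine Pi.covBy_iff.2 ⟨i, ?_, fun j hj => Function.update_of_ne hj _ _⟩
  rw [lowerAt, Function.update_self, Nat.covBy_iff_add_one_eq]
  omega

lemma lowerAt_injective {c : Fin m → ℕ} {i j : Fin m} (hi : 0 < c i)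
    (h : lowerAt c i = lowerAt c j) : i = j := by
  by_contra hij
  have := congrFun h i
  simp only [lowerAt, Function.update_self, Function.update_of_ne hij] at this
  omega

lemma lowerAt_mem {b c : Fin m → ℕ} (hc : c ∈ GammaF n m b) {i : Fin m} (hi : Good b c i) :
    lowerAt c i ∈ GammaF n m b := by
  obtain ⟨⟨hmono, hbd⟩, hbc⟩ := hc
  obtain ⟨hbi, hprev⟩ := hi
  refine ⟨⟨fun j k hjk => ?_, fun j => ?_⟩, fun j => ?_⟩
  · have hcjk := hmono hjk
    rcases eq_or_ne k i with rfl | hk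
    · have := le_prev_of_lt hmono.monotone hjk
      simp only [lowerAt, Function.update_self, Function.update_of_ne hjk.ne]
      omega
    · rcases eq_or_ne j i with rfl | hj
      · simp only [lowerAt, Function.update_self, Function.update_of_ne hk]
        omega
      · simpa only [lowerAt, Function.update_of_ne hj, Function.update_of_ne hk] using hcjk
  · rcases eq_or_ne j i with rfl | hj
    · have := hbd j
      simp only [lowerAt, Function.update_self]
      omega
    · simpa only [lowerAt, Function.update_of_ne hj] using hbd j
  · rcases eq_or_ne j i with rfl | hj
    · simp only [lowerAt, Function.update_self]
      omega
    · simpa only [lowerAt, Function.update_of_ne hj] using hbc j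

lemma exists_lt_and_prev_add_one_lt_of_lt {y c : Fin m → ℕ} (hy : IsTup n m y) (hyc : y < c) :
    ∃ i, y i < c i ∧ prev c i + 1 < c i := by
  obtain ⟨hle, j, hj⟩ := Pi.lt_def.1 hyc
  obtain ⟨i, hi, hmin⟩ := WellFounded.has_min wellFounded_lt {i | y i < c i} ⟨j, hj⟩
  have hbelow : ∀ k < i, y k = c k := fun k hk =>
    (hle k).antisymm (not_lt.1 fun h => hmin k h hk)
  have := prev_lt_self hy i
  rw [prev_congr hbelow] at this
  exact ⟨i, hi, by simp only [Set.mem_ofPred_eq] at hi; omega⟩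

lemma covBy_iff_exists_good {b : Fin m → ℕ} {y c : GammaF n m b} :
    y ⋖ c ↔ ∃ i, Good b c i ∧ (y : Fin m → ℕ) = lowerAt c i := by
  constructor
  · intro h
    obtain ⟨i, hyi, hprev⟩ := exists_lt_and_prev_add_one_lt_of_lt y.2.1 h.lt
    have hgood : Good b c i := ⟨(y.2.2 i).trans_lt hyi, hprev⟩
    let z : GammaF n m b := ⟨lowerAt c i, lowerAt_mem c.2 hgood⟩
    have hzc : z < c := (lowerAt_covBy (by omega)).lt
    have hyz : y ≤ z := le_update_iff.2 ⟨Nat.le_sub_one_of_lt hyi, fun j _ => h.le j⟩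
    exact ⟨i, hgood, congrArg Subtype.val (hyz.eq_of_not_lt (h.2 · hzc))⟩
  · rintro ⟨i, hgood, hy⟩
    refine CovBy.of_image (OrderEmbedding.subtype _) ?_
    simp only [OrderEmbedding.coe_subtype, hy]
    exact lowerAt_covBy (by have := hgood.2; omega)

lemma ncard_covBy_eq_ncard_good {b : Fin m → ℕ} (c : GammaF n m b) :
    {y : GammaF n m b | y ⋖ c}.ncard = {i | Good b c i}.ncard := by
  have himage : Subtype.val '' {y : GammaF n m b | y ⋖ c} = lowerAt c '' {i | Good b c i} := by
    ext z
    simp only [Set.mem_image, Set.mem_ofPred_eq, covBy_iff_exists_good]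
    constructor
    · rintro ⟨y, ⟨i, hi, hy⟩, rfl⟩
      exact ⟨i, hi, hy.symm⟩
    · rintro ⟨i, hi, rfl⟩
      exact ⟨⟨lowerAt c i, lowerAt_mem c.2 hi⟩, ⟨i, hi, rfl⟩, rfl⟩
  have hinj : Set.InjOn (lowerAt c) {i | Good b c i} := fun i hi _ _ h =>
    lowerAt_injective (by have := hi.2; omega) h
  rw [← Set.ncard_image_of_injective _ Subtype.val_injective, himage, hinj.ncard_image]

lemma eq_iff_not_exists_good {b c : Fin m → ℕ} (hb : b ∈ Gamma n m) (hbc : b ≤ c) :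
    c = b ↔ ¬ ∃ i, Good b c i := by
  constructor
  · rintro rfl ⟨i, hi, _⟩
    exact hi.false
  · intro hgood
    by_contra hne
    exact hgood (exists_lt_and_prev_add_one_lt_of_lt hb (lt_of_le_of_ne hbc (Ne.symm hne)))

theorem stmt12_general (n m : ℕ) (b : Fin m → ℕ)
    (hb : b ∈ Gamma n m) (c : ↥(GammaF n m b)) :
    {y : ↥(GammaF n m b) | y ⋖ c}.ncard =
      {i : Fin m | Good b (c : Fin m → ℕ) i}.ncard ∧
    ((c : Fin m → ℕ) = b ↔ ¬ ∃ i : Fin m, Good b (c : Fin m → ℕ) i) ∧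
    (JoinIrr n m b c ↔ ∃! i : Fin m, Good b (c : Fin m → ℕ) i) := by
  have hcard := ncard_covBy_eq_ncard_good c
  refine ⟨hcard, eq_iff_not_exists_good hb c.2.2, ?_⟩
  rw [JoinIrr, existsUnique_iff_ncard_eq_one, existsUnique_iff_ncard_eq_one, hcard]

theorem stmt12 (n m : ℕ) (hm : 1 ≤ m) (hmn : m ≤ n) (b : Fin m → ℕ)
    (hb : b ∈ Gamma n m) (c : ↥(GammaF n m b)) :
    {y : ↥(GammaF n m b) | y ⋖ c}.ncard =
      {i : Fin m | Good b (c : Fin m → ℕ) i}.ncard ∧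
    ((c : Fin m → ℕ) = b ↔ ¬ ∃ i : Fin m, Good b (c : Fin m → ℕ) i) ∧
    (JoinIrr n m b c ↔ ∃! i : Fin m, Good b (c : Fin m → ℕ) i) :=
  stmt12_general n m b hb c
end

section
/- The number of minimal elements of the poset P of join-irreducible elements of Γ(X;γ) equals u = #{i ∈ {1,...,m} : b_i + 1 < b_{i+1} and b_i < n} (with b_{m+1} := n + 1). In particular, P has a unique minimal element iff u = 1. -/
/-!
The minimal join-irreducible elements of `Γ(X;γ)` are exactly its atoms, the covers of `γ`: an
atom covers only `γ`, and every `c ≠ γ` lies above the atom `γ + e_l`, where `l` is the last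
index with `c_l > b_l`. Raising the single entry `b_l` by one keeps the tuple strictly
increasing and bounded by `n` precisely when `l` is a gap index, so the atoms are in bijection
with the gap indices.
-/

theorem IsBot.minimal_existsUnique_covBy_iff {α : Type*} [PartialOrder α] {b c : α}
    (hb : IsBot b) (h : ∀ x, x ≠ b → ∃ a, b ⋖ a ∧ a ≤ x) :
    Minimal (fun x => ∃! y, y ⋖ x) c ↔ b ⋖ c := by
  have existsUnique_of_covBy : ∀ a, b ⋖ a → ∃! y, y ⋖ a := fun a ha =>
    ⟨b, ha, fun y hy => ((hb y).lt_or_eq.resolve_left fun hby => ha.2 hby hy.lt).symm⟩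
  have ne_of_existsUnique : ∀ x, (∃! y, y ⋖ x) → x ≠ b := by
    rintro x ⟨y, hy, -⟩ rfl
    exact hy.lt.not_ge (hb y)
  constructor
  · intro hc
    obtain ⟨a, hba, hac⟩ := h c (ne_of_existsUnique c hc.1)
    rwa [← hc.eq_of_le (existsUnique_of_covBy a hba) hac]
  · intro hc
    refine ⟨existsUnique_of_covBy c hc, fun x hx hxc => ?_⟩
    exact ((hc.eq_or_eq (hb x) hxc).resolve_left (ne_of_existsUnique x hx)).ge

section AddSingle

variable {ι : Type*} [DecidableEq ι]

theorem add_single_one_apply (f : ι → ℕ) (l j : ι) :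
    (f + Pi.single l 1 : ι → ℕ) j = if j = l then f j + 1 else f j := by
  by_cases hj : j = l <;> simp [hj]

theorem eq_or_eq_add_single_of_le_of_le {f g : ι → ℕ} {l : ι} (hfg : f ≤ g)
    (hg : g ≤ f + Pi.single l 1) : g = f ∨ g = f + Pi.single l 1 := by
  by_cases hl : g l = f l
  · left
    funext j
    have h1 : f j ≤ g j := hfg j
    have h2 : g j ≤ (f + Pi.single l 1 : ι → ℕ) j := hg j
    rw [add_single_one_apply] at h2
    split_ifs at h2 with hj
    · exact hj ▸ hl
    · omega
  · right
    funext j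
    have h1 : f j ≤ g j := hfg j
    have h2 : g j ≤ (f + Pi.single l 1 : ι → ℕ) j := hg j
    rw [add_single_one_apply] at h2 ⊢
    split_ifs at h2 ⊢ with hj
    · subst hj
      omega
    · omega

theorem lt_add_single_one (f : ι → ℕ) (l : ι) : f < f + Pi.single l 1 :=
  lt_of_le_of_ne le_self_add fun h => by simpa using congrFun h l

theorem add_single_one_injective (f : ι → ℕ) :
    Function.Injective fun l : ι => f + Pi.single l 1 := by
  intro l l' h
  by_contra hne
  simpa [Ne.symm hne] using congrFun h l

end AddSingle

section GammaF

variable {n m : ℕ} {b : Fin m → ℕ}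

def GammaF.base (hb : b ∈ Gamma n m) : GammaF n m b := ⟨b, hb, le_rfl⟩

theorem GammaF.isBot_base (hb : b ∈ Gamma n m) : IsBot (GammaF.base hb) := fun c => c.2.2

theorem add_single_mem_gammaF (hb : b ∈ Gamma n m) {l : Fin m} (hl : GapIdx n m b l) :
    b + Pi.single l 1 ∈ GammaF n m b := by
  obtain ⟨hmono, hbound⟩ := hb
  refine ⟨⟨fun i j hij => ?_, fun i => ?_⟩, le_self_add⟩
  · simp only [add_single_one_apply]
    split_ifs with hi hj hj
    · exact absurd (hi.trans hj.symm) hij.ne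
    · subst hi
      have hsucc : i.1 + 1 < m := lt_of_lt_of_le (Nat.succ_lt_succ hij) j.2
      have hnext := hl.2 ⟨i.1 + 1, hsucc⟩ rfl
      have := hmono.monotone (show (⟨i.1 + 1, hsucc⟩ : Fin m) ≤ j from hij)
      omega
    · have := hmono hij
      omega
    · exact hmono hij
  · rw [add_single_one_apply]
    split_ifs with hi
    · have := hl.1
      subst hi
      omega
    · exact hbound i

theorem exists_gapIdx_add_single_le {c : Fin m → ℕ} (hc : c ∈ GammaF n m b) (hne : c ≠ b) :
    ∃ l, GapIdx n m b l ∧ b + Pi.single l 1 ≤ c := by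
  obtain ⟨⟨hmono, hbound⟩, hbc⟩ := hc
  set S := Finset.univ.filter fun i => b i < c i
  have hS : S.Nonempty := by
    obtain ⟨i, hi⟩ := Function.ne_iff.1 hne
    exact ⟨i, Finset.mem_filter.2 ⟨Finset.mem_univ _, (hbc i).lt_of_ne' hi⟩⟩
  set l := S.max' hS
  have hl : b l < c l := (Finset.mem_filter.1 (S.max'_mem hS)).2
  have hafter : ∀ j, l < j → c j = b j := fun j hlj => by
    by_contra hj
    have hjS : j ∈ S := Finset.mem_filter.2 ⟨Finset.mem_univ _, (hbc j).lt_of_ne' hj⟩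
    exact (S.le_max' j hjS).not_gt hlj
  refine ⟨l, ⟨hl.trans_le (hbound l).2, fun j hj => ?_⟩, fun j => ?_⟩
  · have hlj : l < j := Fin.lt_def.2 (by omega)
    have := hmono hlj
    rw [hafter j hlj] at this
    omega
  · rw [add_single_one_apply]
    split_ifs with hj
    · exact hj ▸ hl
    · exact hbc j

theorem GammaF.base_covBy_iff (hb : b ∈ Gamma n m) {c : GammaF n m b} :
    GammaF.base hb ⋖ c ↔ ∃ l, GapIdx n m b l ∧ c.1 = b + Pi.single l 1 := by
  constructor
  · intro hc
    obtain ⟨l, hl, hle⟩ := exists_gapIdx_add_single_le c.2 (Subtype.coe_ne_coe.2 hc.lt.ne')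
    let a : GammaF n m b := ⟨_, add_single_mem_gammaF hb hl⟩
    rcases hc.eq_or_eq (GammaF.isBot_base hb a) hle with ha | ha
    · exact ((lt_add_single_one b l).ne' (congrArg Subtype.val ha)).elim
    · exact ⟨l, hl, (congrArg Subtype.val ha).symm⟩
  · rintro ⟨l, hl, hc⟩
    refine ⟨Subtype.coe_lt_coe.1 (hc ▸ lt_add_single_one b l), fun z hbz hzc => ?_⟩
    rcases eq_or_eq_add_single_of_le_of_le z.2.2
      ((Subtype.coe_le_coe.2 hzc.le).trans_eq hc) with hz | hz
    · exact hbz.ne' (Subtype.ext hz)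
    · exact hzc.ne (Subtype.ext (hz.trans hc.symm))

theorem GammaF.minimal_joinIrr_iff (hb : b ∈ Gamma n m) {c : GammaF n m b} :
    Minimal (· ∈ JP n m b) c ↔ ∃ l, GapIdx n m b l ∧ c.1 = b + Pi.single l 1 := by
  refine ((GammaF.isBot_base hb).minimal_existsUnique_covBy_iff fun x hx => ?_).trans
    (GammaF.base_covBy_iff hb)
  obtain ⟨l, hl, hle⟩ := exists_gapIdx_add_single_le x.2 (Subtype.coe_ne_coe.2 hx)
  exact ⟨⟨_, add_single_mem_gammaF hb hl⟩, (GammaF.base_covBy_iff hb).2 ⟨l, hl, rfl⟩,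
    hle⟩

end GammaF

theorem stmt14_general (n m : ℕ) (b : Fin m → ℕ)
    (hb : b ∈ Gamma n m) :
    {c : ↥(GammaF n m b) | Minimal (· ∈ JP n m b) c}.ncard =
      {l : Fin m | GapIdx n m b l}.ncard ∧
    ((∃! c : ↥(GammaF n m b), Minimal (· ∈ JP n m b) c) ↔
      {l : Fin m | GapIdx n m b l}.ncard = 1) := by
  have hcard : {c : ↥(GammaF n m b) | Minimal (· ∈ JP n m b) c}.ncard =
      {l : Fin m | GapIdx n m b l}.ncard := by
    refine (Set.ncard_congr (fun l hl => ⟨b + Pi.single l 1, add_single_mem_gammaF hb hl⟩)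
      (fun l hl => (GammaF.minimal_joinIrr_iff hb).2 ⟨l, hl, rfl⟩)
      (fun l l' _ _ h => add_single_one_injective b (congrArg Subtype.val h))
      (fun c hc => ?_)).symm
    obtain ⟨l, hl, hc⟩ := (GammaF.minimal_joinIrr_iff hb).1 hc
    exact ⟨l, hl, Subtype.ext hc.symm⟩
  refine ⟨hcard, ?_⟩
  rw [← hcard, Set.ncard_eq_one]
  simp [Set.eq_singleton_iff_unique_mem, ExistsUnique]

theorem stmt14 (n m : ℕ) (hm : 1 ≤ m) (hmn : m ≤ n) (b : Fin m → ℕ)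
    (hb : b ∈ Gamma n m) :
    {c : ↥(GammaF n m b) | Minimal (· ∈ JP n m b) c}.ncard =
      {l : Fin m | GapIdx n m b l}.ncard ∧
    ((∃! c : ↥(GammaF n m b), Minimal (· ∈ JP n m b) c) ↔
      {l : Fin m | GapIdx n m b l}.ncard = 1) :=
  stmt14_general n m b hb
end
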